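/- arXiv:2006.03584 — 11 statements merged into one kernel-verified Lean document; each statement's English description precedes it below -/
import Mathlib

section
/- For n ≥ 3, the signed cycle on n vertices in which every edge is negative is a parity signed graph if and only if n is even. -/
/-- A sign assignment on edges: `σ e` means edge `e` is positive. `(G, σ)` is a
*parity signed graph* if there is a bijective labelling `f : V → {1, …, n}`
(`n = |V|`) such that an edge is positive iff its endpoints' labels have the same parity. -/
def IsParitySigned {V : Type*} [Fintype V] (G : SimpleGraph V) (σ : Sym2 V → Prop) : Prop :=
  ∃ f : V → ℕ, Set.BijOn f Set.univ (Set.Icc 1 (Fintype.card V)) ∧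
    ∀ u v : V, G.Adj u v → (σ s(u, v) ↔ f u % 2 = f v % 2)

/-- The endpoints of `e` get labels of opposite parity under `f`. -/
def diffParity {V : Type*} (f : V → ℕ) : Sym2 V → Prop :=
  Sym2.lift ⟨fun u v => f u % 2 ≠ f v % 2, fun _ _ => propext ne_comm⟩

/-- Number of negative edges of `G` under the labelling `f`. -/
noncomputable def negCount {V : Type*} [Fintype V] (G : SimpleGraph V) (f : V → ℕ) : ℕ :=
  {e ∈ G.edgeSet | diffParity f e}.ncard

/-- Number of positive edges of `G` under the labelling `f`. -/
noncomputable def posCount {V : Type*} [Fintype V] (G : SimpleGraph V) (f : V → ℕ) : ℕ :=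
  {e ∈ G.edgeSet | ¬ diffParity f e}.ncard

/-- The *rna* number: the minimum number of negative edges over all bijective
labellings `f : V → {1, …, n}`. -/
noncomputable def rnaNumber {V : Type*} [Fintype V] (G : SimpleGraph V) : ℕ :=
  sInf {k | ∃ f : V → ℕ, Set.BijOn f Set.univ (Set.Icc 1 (Fintype.card V)) ∧ negCount G f = k}

/-- The *adhika* number: the maximum number of positive edges over all bijective
labellings `f : V → {1, …, n}`. -/
noncomputable def adhikaNumber {V : Type*} [Fintype V] (G : SimpleGraph V) : ℕ :=
  sSup {k | ∃ f : V → ℕ, Set.BijOn f Set.univ (Set.Icc 1 (Fintype.card V)) ∧ posCount G f = k}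

/-- The star `K_{1,q}`: center `0`, leaves the `q` nonzero vertices of `Fin (q+1)`. -/
def starGraph (q : ℕ) : SimpleGraph (Fin (q + 1)) :=
  SimpleGraph.fromRel (fun u _ => u = 0)

/-!
An all-negative parity labelling is a proper 2-colouring by parity, and an odd cycle has
chromatic number 3. Conversely, on an even cycle consecutive vertices `i` and `i + 1 (mod n)`
have indices of opposite parity, so the labelling `i ↦ i + 1` makes every edge negative.
-/

open SimpleGraph

theorem IsParitySigned.colorable_two {V : Type*} [Fintype V] {G : SimpleGraph V}
    (h : IsParitySigned G fun _ => False) : G.Colorable 2 := by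
  obtain ⟨f, -, hf⟩ := h
  exact ⟨Coloring.mk (fun v => ⟨f v % 2, Nat.mod_lt _ two_pos⟩) fun {u v} huv heq =>
    (hf u v huv).mpr (Fin.mk.inj heq)⟩

theorem Fin.bijOn_val_add_one (n : ℕ) :
    Set.BijOn (fun i : Fin n => i.val + 1) Set.univ (Set.Icc 1 n) := by
  refine ⟨fun i _ => ⟨Nat.le_add_left 1 _, i.isLt⟩,
    fun i _ j _ h => Fin.ext (by simpa using h), ?_⟩
  rintro m ⟨hm1, hmn⟩
  exact ⟨⟨m - 1, by omega⟩, Set.mem_univ _, by simp only; omega⟩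

theorem isParitySigned_of_adj_iff_val_mod_two {n : ℕ} {G : SimpleGraph (Fin n)}
    {σ : Sym2 (Fin n) → Prop} (h : ∀ u v, G.Adj u v → (σ s(u, v) ↔ u.val % 2 = v.val % 2)) :
    IsParitySigned G σ := by
  refine ⟨fun i => i.val + 1, by simpa using Fin.bijOn_val_add_one n, fun u v huv => ?_⟩
  rw [h u v huv]
  show u.val % 2 = v.val % 2 ↔ (u.val + 1) % 2 = (v.val + 1) % 2
  omega

theorem cycleGraph_val_mod_two_ne_of_adj {n : ℕ} (hn : Even n) {u v : Fin n}
    (huv : (cycleGraph n).Adj u v) : u.val % 2 ≠ v.val % 2 := by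
  have := (cycleGraph.bicoloring_of_even n hn).valid huv
  simp only [cycleGraph.bicoloring_of_even, Coloring.mk, RelHom.coeFn_mk, ne_eq,
    decide_eq_decide] at this
  omega

/-- For `n ≥ 3`, the all-negative signed cycle on `n` vertices is a
parity signed graph iff `n` is even. -/
theorem all_negative_cycle_parity_signed_iff_even (n : ℕ) (hn : 3 ≤ n) :
    IsParitySigned (SimpleGraph.cycleGraph n) (fun _ => False) ↔ Even n := by
  constructor
  · intro h
    by_contra hodd
    have hχ := chromaticNumber_cycleGraph_of_odd n (by omega) (Nat.not_even_iff_odd.mp hodd)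
    have hle := h.colorable_two.chromaticNumber_le
    rw [hχ] at hle
    norm_num at hle
  · intro heven
    exact isParitySigned_of_adj_iff_val_mod_two fun u v huv =>
      iff_of_false id (cycleGraph_val_mod_two_ne_of_adj heven huv)
end

section
/- For n ≥ 3, a signed cycle on n vertices having exactly one positive edge (all other n−1 edges negative) is a parity signed graph if and only if n is odd. -/
open Finset SimpleGraph

lemma even_card_filter_ne_add_one {n : ℕ} [NeZero n] (g : Fin n → ZMod 2) :
    Even #{i | g i ≠ g (i + 1)} := by
  have htelescope : ∑ i, (g (i + 1) - g i) = 0 := by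
    rw [sum_sub_distrib, sub_eq_zero]
    exact Fintype.sum_equiv (Equiv.addRight 1) _ _ fun _ => rfl
  have hterm : ∀ i, g (i + 1) - g i = if g i ≠ g (i + 1) then 1 else 0 := fun i => by
    generalize g i = a, g (i + 1) = b
    revert a b
    decide
  rwa [sum_congr rfl fun i _ => hterm i, sum_boole, ZMod.natCast_eq_zero_iff_even] at htelescope

lemma odd_of_mod_two_eq_add_one_iff {n : ℕ} [NeZero n] (f : Fin n → ℕ) (a : Fin n)
    (h : ∀ i, f i % 2 = f (i + 1) % 2 ↔ i = a) : Odd n := by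
  have hchanges : #{i | f i % 2 ≠ f (i + 1) % 2} = n - 1 := by
    simp only [ne_eq, h, filter_ne', card_erase_of_mem (mem_univ a), card_univ, Fintype.card_fin]
  have heven := even_card_filter_ne_add_one fun i => (f i : ZMod 2)
  simp only [ne_eq, ZMod.natCast_eq_natCast_iff', hchanges] at heven
  obtain ⟨k, hk⟩ := heven
  exact ⟨k, by have := NeZero.pos n; omega⟩

lemma Fin.val_mod_two_eq_val_add_one_mod_two_iff {n : ℕ} (hn : Odd (n + 1)) (x : Fin (n + 1)) :
    x.val % 2 = (x + 1).val % 2 ↔ x = Fin.last n := by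
  obtain ⟨k, hk⟩ := hn
  rw [Fin.val_add_one]
  split_ifs with hx
  · simp only [hx, Fin.val_last, Nat.zero_mod, iff_true]
    omega
  · simp only [hx, iff_false]
    omega

def cyclicLabelling {n : ℕ} (c i : Fin n) : ℕ :=
  (i - c).val + 1

lemma cyclicLabelling_bijOn {n : ℕ} [NeZero n] (c : Fin n) :
    Set.BijOn (cyclicLabelling c) Set.univ (Set.Icc 1 n) := by
  have hval : Set.BijOn (fun x : Fin n => x.val + 1) Set.univ (Set.Icc 1 n) := by
    refine ⟨fun x _ => ?_, fun x _ y _ hxy => ?_, ?_⟩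
    · have := x.isLt
      simp only [Set.mem_Icc]
      omega
    · exact Fin.val_injective (by simpa using hxy)
    · rintro k ⟨hk1, hkn⟩
      exact ⟨⟨k - 1, by omega⟩, Set.mem_univ _, by simp only; omega⟩
  exact hval.comp (Equiv.subRight c).bijective.bijOn_univ

lemma cyclicLabelling_mod_two_eq_iff {n : ℕ} (hn : Odd (n + 1)) (c i : Fin (n + 1)) :
    cyclicLabelling c i % 2 = cyclicLabelling c (i + 1) % 2 ↔ i + 1 = c := by
  have hshift : i + 1 - c = i - c + 1 := add_sub_right_comm i 1 c
  have hlast : i - c = Fin.last n ↔ i + 1 = c := by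
    rw [← add_left_inj 1, Fin.last_add_one, ← hshift, sub_eq_zero]
  rw [← hlast, ← Fin.val_mod_two_eq_val_add_one_mod_two_iff hn, cyclicLabelling,
    cyclicLabelling, hshift]
  omega

lemma mem_edgeSet_cycleGraph_iff {n : ℕ} {e : Sym2 (Fin (n + 2))} :
    e ∈ (cycleGraph (n + 2)).edgeSet ↔ ∃ i, e = s(i, i + 1) := by
  induction e with
  | _ u v =>
    simp only [mem_edgeSet, cycleGraph_adj, sub_eq_iff_eq_add]
    constructor
    · rintro (rfl | rfl)
      · exact ⟨v, by rw [Sym2.eq_swap, add_comm 1 v]⟩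
      · exact ⟨u, by rw [add_comm 1 u]⟩
    · rintro ⟨i, hi⟩
      rcases Sym2.eq_iff.mp hi with ⟨rfl, rfl⟩ | ⟨rfl, rfl⟩
      · exact Or.inr (add_comm _ _)
      · exact Or.inl (add_comm _ _)

lemma sym2_mk_add_one_injective {n : ℕ} :
    Function.Injective fun i : Fin (n + 3) => s(i, i + 1) := by
  intro i j hij
  rcases Sym2.eq_iff.mp hij with ⟨hij, -⟩ | ⟨rfl, hji⟩
  · exact hij
  · rw [add_assoc, add_eq_left, Fin.ext_iff, Fin.val_add] at hji
    simp [Nat.mod_eq_of_lt (show 1 < n + 3 by omega), Nat.mod_eq_of_lt (show 2 < n + 3 by omega)]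
      at hji

lemma isParitySigned_cycleGraph_iff {n : ℕ} (σ : Sym2 (Fin (n + 2)) → Prop) :
    IsParitySigned (cycleGraph (n + 2)) σ ↔
      ∃ f : Fin (n + 2) → ℕ, Set.BijOn f Set.univ (Set.Icc 1 (n + 2)) ∧
        ∀ i, σ s(i, i + 1) ↔ f i % 2 = f (i + 1) % 2 := by
  rw [IsParitySigned, Fintype.card_fin]
  refine exists_congr fun f => and_congr_right fun _ => ⟨fun hf i => ?_, fun hf u v huv => ?_⟩
  · exact hf i (i + 1) ((mem_edgeSet _).mp (mem_edgeSet_cycleGraph_iff.mpr ⟨i, rfl⟩))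
  · rcases (cycleGraph_adj.mp huv).imp sub_eq_iff_eq_add.mp sub_eq_iff_eq_add.mp with rfl | rfl
    · rw [add_comm 1 v, Sym2.eq_swap, hf, eq_comm]
    · rw [add_comm 1 u, hf]

lemma exists_forall_sign_iff_eq_of_existsUnique {n : ℕ} {σ : Sym2 (Fin (n + 3)) → Prop}
    (hσ : ∃! e, e ∈ (cycleGraph (n + 3)).edgeSet ∧ σ e) :
    ∃ a, ∀ i, σ s(i, i + 1) ↔ i = a := by
  obtain ⟨e, ⟨he, hσe⟩, huniq⟩ := hσ
  obtain ⟨a, rfl⟩ := mem_edgeSet_cycleGraph_iff.mp he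
  refine ⟨a, fun i => ⟨fun hi => sym2_mk_add_one_injective ?_, fun hi => hi ▸ hσe⟩⟩
  exact huniq _ ⟨mem_edgeSet_cycleGraph_iff.mpr ⟨i, rfl⟩, hi⟩

/-- For `n ≥ 3`, a signed cycle on `n` vertices with exactly one
positive edge (all other edges negative) is a parity signed graph iff `n` is odd. -/
theorem one_positive_cycle_parity_signed_iff_odd (n : ℕ) (hn : 3 ≤ n)
    (σ : Sym2 (Fin n) → Prop)
    (hσ : ∃! e : Sym2 (Fin n), e ∈ (SimpleGraph.cycleGraph n).edgeSet ∧ σ e) :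
    IsParitySigned (SimpleGraph.cycleGraph n) σ ↔ Odd n := by
  obtain ⟨m, rfl⟩ : ∃ m, n = m + 3 := ⟨n - 3, by omega⟩
  obtain ⟨a, ha⟩ := exists_forall_sign_iff_eq_of_existsUnique hσ
  rw [isParitySigned_cycleGraph_iff]
  constructor
  · rintro ⟨f, -, hf⟩
    exact odd_of_mod_two_eq_add_one_iff f a fun i => (hf i).symm.trans (ha i)
  · intro hodd
    refine ⟨cyclicLabelling (a + 1), cyclicLabelling_bijOn _, fun i => ?_⟩
    rw [ha, cyclicLabelling_mod_two_eq_iff hodd, add_left_inj]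
end

section
/- Let P be a signed path on n ≥ 2 vertices, i.e., vertices v₁, …, v_n, edges e_i = v_i v_{i+1} for 1 ≤ i ≤ n−1, and a sign + or − assigned to each edge. Suppose every maximal run of consecutive negative edges of P has even length (equivalently, P has no odd negative sections). Then P is a parity signed graph if and only if P has no positive edges. -/
/-- A signed path on `n` vertices `v_1, …, v_n`, given by its sign sequence `s`,
where `s i` means that the edge `e_i = v_i v_{i+1}` (for `1 ≤ i ≤ n-1`) is positive,
is a parity signed graph: there is a bijective labelling `f` of the vertices
`{1, …, n}` by the integers `{1, …, n}` such that each edge is positive iff its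
endpoints' labels have the same parity. -/
def PathParitySigned (n : ℕ) (s : ℕ → Prop) : Prop :=
  ∃ f : ℕ → ℕ, Set.BijOn f (Set.Icc 1 n) (Set.Icc 1 n) ∧
    ∀ i : ℕ, 1 ≤ i → i < n → (s i ↔ f i % 2 = f (i + 1) % 2)

/-- `e_a, e_{a+1}, …, e_b` is a maximal run of consecutive negative edges (a negative
section) of the signed path on `n` vertices with sign sequence `s`. -/
def NegSection (n : ℕ) (s : ℕ → Prop) (a b : ℕ) : Prop :=
  1 ≤ a ∧ a ≤ b ∧ b < n ∧ (∀ i : ℕ, a ≤ i → i ≤ b → ¬ s i) ∧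
    (a = 1 ∨ s (a - 1)) ∧ (b = n - 1 ∨ s (b + 1))

open Finset

lemma Set.BijOn.card_filter_comp {α β : Type*} {s : Finset α} {t : Finset β} {f : α → β}
    (hf : Set.BijOn f s t) (p : β → Prop) [DecidablePred p] :
    #(s.filter (fun a => p (f a))) = #(t.filter p) := by
  refine Set.BijOn.finsetCard_eq f ?_
  rw [coe_filter, coe_filter]
  exact hf.inter_mapsTo (s₂ := {a | p (f a)}) (t₂ := {b | p b}) (fun _ h => h) (fun _ h => h.2)

lemma card_filter_mod_two_eq_le (n c : ℕ) :
    #((Icc 1 n).filter (· % 2 = c)) ≤ #((Icc 1 n).filter (· % 2 ≠ c)) + 1 := by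
  set A := (Icc 1 n).filter (· % 2 = c)
  have hshift : #(A \ {1}) ≤ #((Icc 1 n).filter (· % 2 ≠ c)) := by
    refine card_le_card_of_injOn (· - 1) (fun m hm => ?_) (fun a ha b hb hab => ?_)
    · simp only [A, mem_coe, mem_sdiff, mem_singleton, mem_filter, mem_Icc] at hm ⊢
      omega
    · simp only [A, mem_coe, mem_sdiff, mem_filter, mem_Icc] at ha hb
      simp only at hab
      omega
  calc #A ≤ #(A \ {1}) + #({1} : Finset ℕ) := card_le_card_sdiff_add_card
    _ ≤ _ := by rw [card_singleton]; omega

def IsNegInterior (n : ℕ) (s : ℕ → Prop) (i : ℕ) : Prop :=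
  1 < i ∧ i < n ∧ ¬ s (i - 1) ∧ ¬ s i

lemma pathParitySigned_of_forall_not (n : ℕ) (s : ℕ → Prop)
    (hneg : ∀ i : ℕ, 1 ≤ i → i < n → ¬ s i) : PathParitySigned n s :=
  ⟨id, Set.bijOn_id _, fun i hi hin =>
    ⟨fun hsi => absurd hsi (hneg i hi hin), fun h => by simp only [id] at h; omega⟩⟩

section LabelledPath

variable {n : ℕ} {s : ℕ → Prop}

lemma exists_negSection_of_forall_not {a b : ℕ} (ha : 1 ≤ a) (hab : a ≤ b) (hb : b < n)
    (hneg : ∀ m, a ≤ m → m ≤ b → ¬ s m) (hmax : b = n - 1 ∨ s (b + 1)) :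
    ∃ a', NegSection n s a' b := by
  induction a with
  | zero => omega
  | succ a ih =>
    by_cases ha0 : a = 0
    · subst ha0
      exact ⟨1, le_rfl, hab, hb, hneg, Or.inl rfl, hmax⟩
    by_cases hsa : s a
    · exact ⟨a + 1, ha, hab, hb, hneg, Or.inr hsa, hmax⟩
    · refine ih (by omega) (by omega) fun m ham hmb => ?_
      rcases ham.eq_or_lt with rfl | ham
      · exact hsa
      · exact hneg m ham hmb

variable {f : ℕ → ℕ}
  (hf : ∀ i : ℕ, 1 ≤ i → i < n → (s i ↔ f i % 2 = f (i + 1) % 2))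
include hf

lemma mod_two_add_of_forall_not {a k : ℕ} (ha : 1 ≤ a) (hak : a + k ≤ n)
    (hneg : ∀ m, a ≤ m → m < a + k → ¬ s m) : f (a + k) % 2 = (f a + k) % 2 := by
  induction k with
  | zero => rfl
  | succ k ih =>
    have hprev := ih (by omega) fun m ham hmk => hneg m ham (by omega)
    have hflip := mt (hf (a + k) (by omega) (by omega)).mpr (hneg (a + k) (by omega) (by omega))
    rw [← add_assoc]
    omega

lemma mod_two_eq_of_not_isNegInterior (h : ∀ a b : ℕ, NegSection n s a b → Even (b - a + 1))
    {i : ℕ} (hi : 1 ≤ i) (hin : i ≤ n) (hint : ¬ IsNegInterior n s i) :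
    f i % 2 = f 1 % 2 := by
  induction i using Nat.strong_induction_on with
  | _ i ih =>
  rcases hi.eq_or_lt with rfl | hi
  · rfl
  by_cases hprev : s (i - 1)
  · have hpos := (hf (i - 1) (by omega) (by omega)).mp hprev
    rw [Nat.sub_add_cancel hi.le] at hpos
    rw [← hpos]
    exact ih (i - 1) (by omega) (by omega) (by omega) fun hc => hc.2.2.2 hprev
  · have hmax : i - 1 = n - 1 ∨ s (i - 1 + 1) := by
      by_cases hsi : s i
      · exact Or.inr (by rwa [Nat.sub_add_cancel hi.le])
      · exact Or.inl (by by_contra hne; exact hint ⟨hi, by omega, hprev, hsi⟩)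
    obtain ⟨a, hsec⟩ := exists_negSection_of_forall_not (a := i - 1) (by omega) le_rfl
      (by omega) (fun m h1 h2 => by rwa [show m = i - 1 by omega]) hmax
    obtain ⟨t, ht⟩ := h a (i - 1) hsec
    obtain ⟨ha, hai, -, hneg, hstart, -⟩ := hsec
    have hrun := mod_two_add_of_forall_not hf (k := i - a) ha (by omega)
      fun m h1 h2 => hneg m h1 (by omega)
    have hfa := ih a (by omega) ha (by omega) fun hc => by
      rcases hstart with rfl | hs
      · exact absurd hc.1 (lt_irrefl 1)
      · exact hc.2.2.1 hs
    rw [Nat.add_sub_cancel' (by omega)] at hrun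
    omega

lemma card_filter_mod_two_ne_add_two_le (h : ∀ a b : ℕ, NegSection n s a b → Even (b - a + 1))
    {j : ℕ} (hj : 1 ≤ j) (hjn : j < n) (hsj : s j) :
    #((Icc 1 n).filter (fun i => f i % 2 ≠ f 1 % 2)) + 2 ≤
      #((Icc 1 n).filter (fun i => f i % 2 = f 1 % 2)) := by
  set U := (Icc 1 n).filter (fun i => f i % 2 = f 1 % 2)
  have hsub : {1, j + 1} ⊆ U := by
    intro i hi
    simp only [mem_insert, mem_singleton] at hi
    simp only [U, mem_filter, mem_Icc]
    rcases hi with rfl | rfl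
    · exact ⟨⟨le_rfl, by omega⟩, rfl⟩
    · refine ⟨⟨by omega, hjn⟩, mod_two_eq_of_not_isNegInterior hf h (by omega) hjn ?_⟩
      exact fun hc => hc.2.2.1 hsj
  have hshift : Set.MapsTo (· + 1) ((Icc 1 n).filter (fun i => f i % 2 ≠ f 1 % 2))
      ((U \ {1, j + 1} : Finset ℕ) : Set ℕ) := by
    intro i hi
    simp only [coe_filter, Set.mem_ofPred_eq, mem_Icc] at hi
    obtain ⟨hi1, hin, hprev, hsi⟩ : IsNegInterior n s i := by
      by_contra hint
      exact hi.2 (mod_two_eq_of_not_isNegInterior hf h hi.1.1 hi.1.2 hint)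
    have hflip := mt (hf i hi1.le hin).mpr hsi
    have hij : i ≠ j := by rintro rfl; exact hsi hsj
    simp only [mem_coe, mem_sdiff, U, mem_filter, mem_Icc, mem_insert, mem_singleton]
    omega
  calc #((Icc 1 n).filter (fun i => f i % 2 ≠ f 1 % 2)) + 2
      ≤ #(U \ {1, j + 1}) + #({1, j + 1} : Finset ℕ) := by
        rw [card_pair (by omega)]
        exact Nat.add_le_add_right (card_le_card_of_injOn _ hshift (add_left_injective 1).injOn) 2
    _ = #U := card_sdiff_add_card_eq_card hsub

end LabelledPath

theorem path_no_odd_negative_sections_general (n : ℕ) (s : ℕ → Prop)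
    (h : ∀ a b : ℕ, NegSection n s a b → Even (b - a + 1)) :
    PathParitySigned n s ↔ ∀ i : ℕ, 1 ≤ i → i < n → ¬ s i := by
  constructor
  · rintro ⟨f, hbij, hf⟩ j hj hjn hsj
    rw [← coe_Icc] at hbij
    have hlabels := card_filter_mod_two_eq_le n (f 1 % 2)
    rw [← hbij.card_filter_comp (· % 2 = f 1 % 2),
      ← hbij.card_filter_comp (· % 2 ≠ f 1 % 2)] at hlabels
    have hexcess := card_filter_mod_two_ne_add_two_le hf h hj hjn hsj
    omega
  · exact pathParitySigned_of_forall_not n s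

/-- If every negative section of a signed path on `n ≥ 2` vertices has
even length, then the path is a parity signed graph iff it has no positive edges. -/
theorem path_no_odd_negative_sections (n : ℕ) (hn : 2 ≤ n) (s : ℕ → Prop)
    (h : ∀ a b : ℕ, NegSection n s a b → Even (b - a + 1)) :
    PathParitySigned n s ↔ ∀ i : ℕ, 1 ≤ i → i < n → ¬ s i :=
  path_no_odd_negative_sections_general n s h
end

section
/- Let P be a signed path on n ≥ 2 vertices, i.e., vertices v₁, …, v_n, edges e_i = v_i v_{i+1} for 1 ≤ i ≤ n−1, and a sign + or − assigned to each edge. Suppose P has exactly one maximal run of consecutive negative edges of odd length, say the edges e_a, …, e_b. Then P is a parity signed graph if and only if the number of positive edges among e₁, …, e_{a−1} and the number of positive edges among e_{b+1}, …, e_{n−1} differ by at most 1. -/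
open Finset

theorem exists_bijOn_iff_card_filter_eq {α : Type*} [Nonempty α] (S : Finset α)
    (p q : α → Prop) [DecidablePred p] [DecidablePred q] :
    (∃ f : α → α, Set.BijOn f S S ∧ ∀ x ∈ S, (p x ↔ q (f x))) ↔
      #{x ∈ S | p x} = #{x ∈ S | q x} := by
  have hsplit (r : α → Prop) [DecidablePred r] :
      (S : Set α) = ↑({x ∈ S | r x}) ∪ ↑({x ∈ S | ¬ r x}) := by
    ext x; simp only [coe_filter, Set.mem_union, Set.mem_ofPred_eq, mem_coe]; tauto
  constructor
  · rintro ⟨f, hf, hpq⟩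
    refine Set.BijOn.finsetCard_eq f
      ⟨fun x hx => ?_, hf.injOn.mono (coe_subset.2 (filter_subset _ _)), fun y hy => ?_⟩
    · simp only [coe_filter, Set.mem_ofPred_eq] at hx ⊢
      exact ⟨hf.mapsTo hx.1, (hpq x hx.1).1 hx.2⟩
    · simp only [coe_filter, Set.mem_ofPred_eq, Set.mem_image] at hy ⊢
      obtain ⟨x, hx, rfl⟩ := hf.surjOn hy.1
      exact ⟨x, ⟨hx, (hpq x hx).2 hy.2⟩, rfl⟩
  · intro h
    have h' : #{x ∈ S | ¬ p x} = #{x ∈ S | ¬ q x} := by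
      have := S.card_filter_add_card_filter_not (fun x => p x)
      have := S.card_filter_add_card_filter_not (fun x => q x)
      omega
    obtain ⟨g, hg⟩ := ({x ∈ S | p x} : Finset α).finite_toSet.exists_bijOn_of_encard_eq
      (t := (({x ∈ S | q x} : Finset α) : Set α))
      (by simp only [Set.encard_coe_eq_coe_finsetCard, h])
    obtain ⟨g', hg'⟩ := ({x ∈ S | ¬ p x} : Finset α).finite_toSet.exists_bijOn_of_encard_eq
      (t := (({x ∈ S | ¬ q x} : Finset α) : Set α))
      (by simp only [Set.encard_coe_eq_coe_finsetCard, h'])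
    set f : α → α := fun x => if p x then g x else g' x
    have hfg : Set.BijOn f ↑({x ∈ S | p x}) ↑({x ∈ S | q x}) :=
      hg.congr fun x hx => by simp_all [f]
    have hfg' : Set.BijOn f ↑({x ∈ S | ¬ p x}) ↑({x ∈ S | ¬ q x}) :=
      hg'.congr fun x hx => by simp_all [f]
    refine ⟨f, ?_, fun x hx => ?_⟩
    · have hinj : Set.InjOn f (↑({x ∈ S | p x}) ∪ ↑({x ∈ S | ¬ p x})) := by
        refine (Set.injOn_union (disjoint_coe.2 (disjoint_filter_filter_not _ _ _))).2
          ⟨hfg.injOn, hfg'.injOn, fun x hx y hy hxy => ?_⟩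
        have := hfg.mapsTo hx
        have := hfg'.mapsTo hy
        simp_all
      simpa only [← hsplit] using hfg.union hfg' hinj
    · by_cases hpx : p x
      · have := hfg.mapsTo (by simpa using ⟨hx, hpx⟩ : x ∈ (↑({x ∈ S | p x}) : Set α))
        simp_all
      · have := hfg'.mapsTo (by simpa using ⟨hx, hpx⟩ : x ∈ (↑({x ∈ S | ¬ p x}) : Set α))
        simp_all

theorem card_Icc_filter_mod_two (n : ℕ) {r : ℕ} (hr : r < 2) :
    #{x ∈ Icc 1 n | x % 2 = r} = (n + r) / 2 := by
  induction n with
  | zero => simp; omega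
  | succ n ih =>
    rw [card_filter, sum_Icc_succ_top (by omega), ← card_filter, ih]
    split_ifs <;> omega

section SignSequence

variable (s : ℕ → Prop) [DecidablePred s]

def negEdgesBefore (m : ℕ) : ℕ := #{j ∈ Ico 1 m | ¬ s j}

def vertexSign (m : ℕ) : ℤ := (-1) ^ negEdgesBefore s m

@[simp]
theorem negEdgesBefore_one : negEdgesBefore s 1 = 0 := by simp [negEdgesBefore]

theorem negEdgesBefore_succ {m : ℕ} (hm : 1 ≤ m) :
    negEdgesBefore s (m + 1) = negEdgesBefore s m + if s m then 0 else 1 := by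
  rw [negEdgesBefore, card_filter, sum_Ico_succ_top hm, ← card_filter, negEdgesBefore]
  split_ifs <;> rfl

theorem even_negEdgesBefore_succ_iff {m : ℕ} (hm : 1 ≤ m) :
    Even (negEdgesBefore s (m + 1)) ↔ (Even (negEdgesBefore s m) ↔ s m) := by
  by_cases h : s m <;> simp [negEdgesBefore_succ s hm, h, Nat.even_add_one]

theorem vertexSign_succ {m : ℕ} (hm : 1 ≤ m) :
    vertexSign s (m + 1) = if s m then vertexSign s m else -vertexSign s m := by
  rw [vertexSign, vertexSign, negEdgesBefore_succ s hm]
  split_ifs <;> simp [pow_succ]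

theorem sum_vertexSign (S : Finset ℕ) :
    ∑ m ∈ S, vertexSign s m = 2 * #{m ∈ S | Even (negEdgesBefore s m)} - #S := by
  simp only [vertexSign, neg_one_pow_eq_ite, sum_ite, sum_const, nsmul_eq_mul, mul_one, mul_neg]
  have := S.card_filter_add_card_filter_not (fun m => Even (negEdgesBefore s m))
  omega

theorem pathParitySigned_iff_exists_card_eq (n : ℕ) :
    PathParitySigned n s ↔
      ∃ r < 2, #{m ∈ Icc 1 n | Even (negEdgesBefore s m)} = #{x ∈ Icc 1 n | x % 2 = r} := by
  simp only [PathParitySigned, ← exists_bijOn_iff_card_filter_eq, coe_Icc, mem_Icc]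
  constructor
  · rintro ⟨f, hf, hedge⟩
    refine ⟨f 1 % 2, Nat.mod_lt _ two_pos, f, hf, fun m ⟨hm1, hmn⟩ => ?_⟩
    induction m, hm1 using Nat.le_induction with
    | base => simp
    | succ m hm ih =>
      have := even_negEdgesBefore_succ_iff s hm
      have := hedge m hm (by omega)
      have := ih (by omega)
      simp only [Nat.even_iff] at *
      grind
  · rintro ⟨r, hr, f, hf, hpar⟩
    refine ⟨f, hf, fun i hi hin => ?_⟩
    have := hpar i ⟨hi, by omega⟩
    have := hpar (i + 1) ⟨by omega, hin⟩
    have := even_negEdgesBefore_succ_iff s hi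
    simp only [Nat.even_iff] at *
    grind

theorem pathParitySigned_iff_abs_sum_vertexSign_le_one (n : ℕ) :
    PathParitySigned n s ↔ |∑ m ∈ Icc 1 n, vertexSign s m| ≤ 1 := by
  rw [pathParitySigned_iff_exists_card_eq, sum_vertexSign, Nat.card_Icc, abs_le]
  constructor
  · rintro ⟨r, hr, hcard⟩
    rw [card_Icc_filter_mod_two n hr] at hcard
    omega
  · intro h
    obtain h | h : #{m ∈ Icc 1 n | Even (negEdgesBefore s m)} = (n + 0) / 2 ∨
        #{m ∈ Icc 1 n | Even (negEdgesBefore s m)} = (n + 1) / 2 := by omega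
    · exact ⟨0, two_pos, h.trans (card_Icc_filter_mod_two n two_pos).symm⟩
    · exact ⟨1, one_lt_two, h.trans (card_Icc_filter_mod_two n one_lt_two).symm⟩

theorem two_mul_sum_vertexSign {n : ℕ} (hn : 1 ≤ n) :
    2 * ∑ m ∈ Icc 1 n, vertexSign s m =
      1 + vertexSign s n + 2 * ∑ i ∈ Ico 1 n, if s i then vertexSign s i else 0 := by
  induction n, hn using Nat.le_induction with
  | base => simp [vertexSign]
  | succ n hn ih =>
    rw [sum_Icc_succ_top (by omega), sum_Ico_succ_top hn, vertexSign_succ s hn]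
    split_ifs <;> linarith

end SignSequence

theorem NegSection.eq_of_overlap {n : ℕ} {s : ℕ → Prop} {a₁ b₁ a₂ b₂ : ℕ}
    (h₁ : NegSection n s a₁ b₁) (h₂ : NegSection n s a₂ b₂) (h₂₁ : a₂ ≤ b₁) (h₁₂ : a₁ ≤ b₂) :
    a₁ = a₂ ∧ b₁ = b₂ := by
  obtain ⟨ha₁, -, hb₁, hneg₁, hl₁, hr₁⟩ := h₁
  obtain ⟨ha₂, -, hb₂, hneg₂, hl₂, hr₂⟩ := h₂
  have ha : a₁ = a₂ := by
    by_contra hne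
    rcases Nat.lt_or_gt_of_ne hne with h | h
    · exact hneg₁ (a₂ - 1) (by omega) (by omega) (hl₂.resolve_left (by omega))
    · exact hneg₂ (a₁ - 1) (by omega) (by omega) (hl₁.resolve_left (by omega))
  refine ⟨ha, ?_⟩
  by_contra hne
  rcases Nat.lt_or_gt_of_ne hne with h | h
  · exact hneg₂ (b₁ + 1) (by omega) (by omega) (hr₁.resolve_left (by omega))
  · exact hneg₁ (b₂ + 1) (by omega) (by omega) (hr₂.resolve_left (by omega))

/-- The negative edges `e_c, …, e_{m-1}` are the whole run of negative edges ending just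
before `v_m` (empty when `c = m`). -/
structure IsRunStart (s : ℕ → Prop) (c m : ℕ) : Prop where
  one_le : 1 ≤ c
  le : c ≤ m
  isCut : c = 1 ∨ s (c - 1)
  not_pos : ∀ j, c ≤ j → j < m → ¬ s j

theorem IsRunStart.negSection {n : ℕ} {s : ℕ → Prop} {c m : ℕ} (h : IsRunStart s c m)
    (hcm : c < m) (hmn : m ≤ n) (hm : m = n ∨ s m) : NegSection n s c (m - 1) := by
  obtain ⟨hc, -, hcut, hrun⟩ := h
  refine ⟨hc, by omega, by omega, fun j hj hjm => hrun j hj (by omega), hcut, ?_⟩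
  rcases hm with rfl | hm
  · exact Or.inl rfl
  · exact Or.inr (by rwa [Nat.sub_add_cancel (by omega)])

section UniqueOddSection

variable {n : ℕ} {s : ℕ → Prop} [DecidablePred s] {a b : ℕ} (hab : NegSection n s a b)
  (hodd : Odd (b - a + 1))
  (huniq : ∀ a' b' : ℕ, NegSection n s a' b' → Odd (b' - a' + 1) → a' = a ∧ b' = b)
include hab hodd huniq

/-- Once the run before `v_m` is closed off (`m = n` or `e_m` positive) it is a negative section,
of even length unless it is `e_a, …, e_b`. -/
theorem negEdgesBefore_mod_two_of_isRunStart {c m : ℕ} (hc : IsRunStart s c m) (hmn : m ≤ n)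
    (hm : m = n ∨ s m) (hpar : (negEdgesBefore s m + (m - c)) % 2 = if b < c then 1 else 0) :
    negEdgesBefore s m % 2 = if b < m then 1 else 0 := by
  obtain rfl | hcm := hc.le.eq_or_lt
  · simpa using hpar
  have hsec := hc.negSection hcm hmn hm
  by_cases hab' : c = a ∧ m - 1 = b
  · obtain ⟨rfl, hb⟩ := hab'
    rw [Nat.odd_iff] at hodd
    split_ifs at hpar ⊢ <;> omega
  · have heven : ¬ Odd (m - 1 - c + 1) := fun h => hab' (huniq c (m - 1) hsec h)
    have hdisj : b < c ∨ m - 1 < a := by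
      by_contra! h
      exact hab' (hsec.eq_of_overlap hab (by omega) (by omega))
    have hle : a ≤ b := hab.2.1
    rw [Nat.odd_iff] at heven
    split_ifs at hpar ⊢ <;> omega

theorem exists_isRunStart {m : ℕ} (hm : 1 ≤ m) (hmn : m ≤ n) :
    ∃ c, IsRunStart s c m ∧ (negEdgesBefore s m + (m - c)) % 2 = if b < c then 1 else 0 := by
  have ⟨ha, hab', _, hneg, _⟩ := hab
  induction m, hm using Nat.le_induction with
  | base =>
    refine ⟨1, ⟨le_rfl, le_rfl, Or.inl rfl, fun j hj hj1 => absurd hj1 (by omega)⟩, ?_⟩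
    rw [if_neg (by omega)]
    simp
  | succ m hm ih =>
    obtain ⟨c, hc, hpar⟩ := ih (by omega)
    have hcm := hc.le
    rw [negEdgesBefore_succ s hm]
    by_cases hs : s m
    · have hbm : b ≠ m := fun h => hneg b hab' le_rfl (h ▸ hs)
      have := negEdgesBefore_mod_two_of_isRunStart hab hodd huniq hc (by omega) (Or.inr hs) hpar
      refine ⟨m + 1, ⟨by omega, le_rfl, Or.inr hs, fun j hj hjm => absurd hjm (by omega)⟩, ?_⟩
      simp only [hs, if_true, add_zero, Nat.sub_self]
      split_ifs at this ⊢ <;> omega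
    · refine ⟨c, ⟨hc.one_le, by omega, hc.isCut, fun j hj hjm => ?_⟩, ?_⟩
      · obtain hjm | rfl := Nat.lt_succ_iff_lt_or_eq.1 hjm
        exacts [hc.not_pos j hj hjm, hs]
      · simp only [hs, if_false]
        split_ifs at hpar ⊢ <;> omega

theorem vertexSign_eq_ite {m : ℕ} (hm : 1 ≤ m) (hmn : m ≤ n) (hclosed : m = n ∨ s m) :
    vertexSign s m = if b < m then -1 else 1 := by
  obtain ⟨c, hc, hpar⟩ := exists_isRunStart hab hodd huniq hm hmn
  have := negEdgesBefore_mod_two_of_isRunStart hab hodd huniq hc hmn hclosed hpar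
  rw [vertexSign, neg_one_pow_eq_pow_mod_two, this]
  split_ifs <;> simp

theorem sum_vertexSign_positive_edges :
    ∑ i ∈ Ico 1 n, (if s i then vertexSign s i else 0) =
      (#{i ∈ Ico 1 a | s i} : ℤ) - #{i ∈ Ico (b + 1) n | s i} := by
  have ⟨ha, _, hbn, hneg, _⟩ := hab
  have hbefore : ∑ i ∈ Ico 1 a, (if s i then vertexSign s i else 0) = #{i ∈ Ico 1 a | s i} := by
    rw [natCast_card_filter]
    refine sum_congr rfl fun i hi => ?_
    rw [mem_Ico] at hi
    split_ifs with hs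
    · rw [vertexSign_eq_ite hab hodd huniq hi.1 (by omega) (Or.inr hs), if_neg (by omega)]
    · rfl
  have hinside : ∑ i ∈ Ico a (b + 1), (if s i then vertexSign s i else 0) = 0 :=
    sum_eq_zero fun i hi => if_neg (by rw [mem_Ico] at hi; exact hneg i hi.1 (by omega))
  have hafter : ∑ i ∈ Ico (b + 1) n, (if s i then vertexSign s i else 0) =
      -#{i ∈ Ico (b + 1) n | s i} := by
    rw [natCast_card_filter, ← sum_neg_distrib]
    refine sum_congr rfl fun i hi => ?_
    rw [mem_Ico] at hi
    split_ifs with hs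
    · rw [vertexSign_eq_ite hab hodd huniq (by omega) hi.2.le (Or.inr hs), if_pos (by omega)]
    · rfl
  rw [← sum_Ico_consecutive _ (by omega : 1 ≤ b + 1) hbn, ← sum_Ico_consecutive _ ha
    (by omega : a ≤ b + 1), hbefore, hinside, hafter]
  ring

theorem sum_vertexSign_eq_sub :
    ∑ m ∈ Icc 1 n, vertexSign s m = (#{i ∈ Ico 1 a | s i} : ℤ) - #{i ∈ Ico (b + 1) n | s i} := by
  have ⟨ha, hab', hbn, _⟩ := hab
  have hn : 1 ≤ n := by omega
  have := two_mul_sum_vertexSign s hn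
  rw [sum_vertexSign_positive_edges hab hodd huniq,
    vertexSign_eq_ite hab hodd huniq hn le_rfl (Or.inl rfl), if_pos hbn] at this
  linarith

end UniqueOddSection

theorem path_one_odd_negative_section_general (n : ℕ) (s : ℕ → Prop) (a b : ℕ)
    (hab : NegSection n s a b) (hodd : Odd (b - a + 1))
    (huniq : ∀ a' b' : ℕ, NegSection n s a' b' → Odd (b' - a' + 1) → a' = a ∧ b' = b) :
    PathParitySigned n s ↔
      |({i : ℕ | 1 ≤ i ∧ i < a ∧ s i}.ncard : ℤ) -
        ({i : ℕ | b + 1 ≤ i ∧ i < n ∧ s i}.ncard : ℤ)| ≤ 1 := by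
  classical
  have hcard (l m : ℕ) : {i : ℕ | l ≤ i ∧ i < m ∧ s i}.ncard = #{i ∈ Ico l m | s i} := by
    rw [← Set.ncard_coe_finset]
    congr
    ext i
    simp [and_assoc]
  rw [pathParitySigned_iff_abs_sum_vertexSign_le_one, sum_vertexSign_eq_sub hab hodd huniq,
    hcard, hcard]

/-- If a signed path on `n ≥ 2` vertices has exactly one negative
section of odd length, namely `e_a, …, e_b`, then it is a parity signed graph iff the
numbers of positive edges strictly before `e_a` and strictly after `e_b` differ by at
most `1`. -/
theorem path_one_odd_negative_section (n : ℕ) (hn : 2 ≤ n) (s : ℕ → Prop) (a b : ℕ)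
    (hab : NegSection n s a b) (hodd : Odd (b - a + 1))
    (huniq : ∀ a' b' : ℕ, NegSection n s a' b' → Odd (b' - a' + 1) → a' = a ∧ b' = b) :
    PathParitySigned n s ↔
      |({i : ℕ | 1 ≤ i ∧ i < a ∧ s i}.ncard : ℤ) -
        ({i : ℕ | b + 1 ≤ i ∧ i < n ∧ s i}.ncard : ℤ)| ≤ 1 :=
  path_one_odd_negative_section_general n s a b hab hodd huniq
end

section
/- Let G be a finite connected simple graph on n vertices. There exists a bijection f : V(G) → {1, 2, …, n} such that for every edge uv of G the labels f(u) and f(v) have opposite parity, if and only if G is bipartite with a bipartition V(G) = A ∪ B (every edge joining A to B) satisfying ||A| − |B|| ≤ 1. -/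
open Finset

theorem Equiv.exists_apply_iff_of_card_subtype_eq {α β : Type*} [Fintype α] [Fintype β]
    {p : α → Prop} {q : β → Prop} [DecidablePred p] [DecidablePred q]
    (hpos : Fintype.card {a // p a} = Fintype.card {b // q b})
    (hneg : Fintype.card {a // ¬p a} = Fintype.card {b // ¬q b}) :
    ∃ e : α ≃ β, ∀ a, q (e a) ↔ p a := by
  refine ⟨(Equiv.sumCompl p).symm.trans ((Equiv.sumCongr (Fintype.equivOfCardEq hpos)
    (Fintype.equivOfCardEq hneg)).trans (Equiv.sumCompl q)), fun a => ?_⟩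
  by_cases ha : p a
  · simp [Equiv.sumCompl_symm_apply_of_pos ha, ha, Subtype.prop]
  · simp only [trans_apply, Equiv.sumCompl_symm_apply_of_neg ha, sumCongr_apply, Sum.map_inr,
      sumCompl_apply_inr, ha, iff_false]
    exact (Fintype.equivOfCardEq hneg ⟨a, ha⟩).2

theorem Set.bijOn_univ_coe_equiv {α β : Type*} {t : Finset β} (e : α ≃ t) :
    Set.BijOn (fun a => (e a : β)) Set.univ t :=
  ⟨fun a _ => (e a).2, (Subtype.val_injective.comp e.injective).injOn,
    fun b hb => ⟨e.symm ⟨b, hb⟩, trivial, by simp⟩⟩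

theorem Nat.card_filter_two_dvd_Icc_one (n : ℕ) : #{k ∈ Icc 1 n | 2 ∣ k} = n / 2 := by
  rw [← Nat.Ioc_filter_dvd_card_eq_div, ← Finset.Icc_succ_left_eq_Ioc, Order.succ_eq_add_one,
    zero_add]

theorem exists_bijOn_Icc_two_dvd_iff_card_eq {V : Type*} [Fintype V] [DecidableEq V]
    (A : Finset V) :
    (∃ f : V → ℕ, Set.BijOn f Set.univ (Set.Icc 1 (Fintype.card V)) ∧ ∀ v, 2 ∣ f v ↔ v ∈ A) ↔
      #A = Fintype.card V / 2 := by
  set n := Fintype.card V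
  constructor
  · rintro ⟨f, hf, hA⟩
    have hA : A = ({v | 2 ∣ f v} : Finset V) := by ext v; simp [hA]
    rw [hA, ← Nat.card_filter_two_dvd_Icc_one]
    refine card_nbij f (fun v hv => ?_) (hf.injOn.mono (by simp)) (fun k hk => ?_)
    · simpa [← Set.mem_Icc] using And.intro (hf.mapsTo (Set.mem_univ v)) (mem_filter.1 hv).2
    · simp only [coe_filter, mem_Icc] at hk
      obtain ⟨v, -, rfl⟩ := hf.surjOn hk.1
      exact ⟨v, by simpa using hk.2, rfl⟩
  · intro hA
    have hcard : Fintype.card {k : Icc 1 n // 2 ∣ (k : ℕ)} = n / 2 := by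
      rw [Fintype.card_subtype, univ_eq_attach, filter_attach, card_map, card_attach,
        Nat.card_filter_two_dvd_Icc_one]
    obtain ⟨e, he⟩ := Equiv.exists_apply_iff_of_card_subtype_eq (p := (· ∈ A))
      (q := fun k : Icc 1 n => 2 ∣ (k : ℕ))
      (by simpa [hA] using hcard.symm)
      (by rw [Fintype.card_subtype_compl, Fintype.card_subtype_compl, hcard]; simp [hA, n])
    exact ⟨_, by simpa using Set.bijOn_univ_coe_equiv e, he⟩

theorem all_negative_parity_signed_iff_balanced_bipartition_general {V : Type*} [Fintype V]
    [DecidableEq V] (G : SimpleGraph V) :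
    (∃ f : V → ℕ, Set.BijOn f Set.univ (Set.Icc 1 (Fintype.card V)) ∧
        ∀ u v : V, G.Adj u v → f u % 2 ≠ f v % 2) ↔
      ∃ A : Finset V, (∀ u v : V, G.Adj u v → ((u ∈ A) ↔ (v ∉ A))) ∧
        |(A.card : ℤ) - (Aᶜ.card : ℤ)| ≤ 1 := by
  constructor
  · rintro ⟨f, hf, hneg⟩
    set A : Finset V := {v | 2 ∣ f v}
    have hA := (exists_bijOn_Icc_two_dvd_iff_card_eq A).1 ⟨f, hf, by simp [A]⟩
    have hsum := card_add_card_compl A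
    refine ⟨A, fun u v huv => ?_, abs_le.2 ⟨by omega, by omega⟩⟩
    have := hneg u v huv
    simp only [A, mem_filter, mem_univ, true_and]
    omega
  · rintro ⟨A, hbip, hbal⟩
    have hsum := card_add_card_compl A
    wlog hA : #A = Fintype.card V / 2 generalizing A
    · refine this Aᶜ (fun u v huv => ?_) ?_ (by rwa [compl_compl, add_comm]) ?_
      · simpa using (iff_not_comm.1 (hbip u v huv)).symm
      · rw [compl_compl, abs_sub_comm]; exact hbal
      · rw [abs_le] at hbal; omega
    obtain ⟨f, hf, hfA⟩ := (exists_bijOn_Icc_two_dvd_iff_card_eq A).2 hA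
    refine ⟨f, hf, fun u v huv => ?_⟩
    have := hbip u v huv
    rw [← hfA, ← hfA] at this
    omega

/-- A connected graph `G` admits a bijective labelling
`f : V → {1, …, n}` under which every edge joins labels of opposite parity iff `G` is
bipartite with a bipartition `(A, Aᶜ)` (every edge joins `A` to `Aᶜ`) whose parts have
sizes differing by at most `1`. -/
theorem all_negative_parity_signed_iff_balanced_bipartition {V : Type*} [Fintype V]
    [DecidableEq V] (G : SimpleGraph V) (hG : G.Connected) :
    (∃ f : V → ℕ, Set.BijOn f Set.univ (Set.Icc 1 (Fintype.card V)) ∧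
        ∀ u v : V, G.Adj u v → f u % 2 ≠ f v % 2) ↔
      ∃ A : Finset V, (∀ u v : V, G.Adj u v → ((u ∈ A) ↔ (v ∉ A))) ∧
        |(A.card : ℤ) - (Aᶜ.card : ℤ)| ≤ 1 :=
  all_negative_parity_signed_iff_balanced_bipartition_general G
end

section
/- Let S be the signed star K_{1,m+n} with one central vertex joined to m + n leaves, where exactly m of the edges are assigned sign + and exactly n of the edges are assigned sign −. Then S is a parity signed graph if and only if: (i) n = m or n = m + 2, when m + n is even; or (ii) n = m or n = m + 1, when m + n is odd. -/
/-! Every edge of a star contains the centre, so a labelling realises `σ` exactly when the labels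
of the centre's parity are carried by the centre and the positive leaves. Hence `σ` is a parity
signing iff `m + 1` is the number of labels in `{1, …, m + n + 1}` of one parity, that is
`⌈(m + n + 1) / 2⌉` or `⌊(m + n + 1) / 2⌋`; a labelling with a prescribed parity split is glued
from bijections onto the two parity classes. -/

open Set

theorem Set.BijOn.ncard_preimage {α β : Type*} {f : α → β} {t : Set β} (hf : BijOn f univ t)
    (u : Set β) : (f ⁻¹' u).ncard = (t ∩ u).ncard := by
  have hinj : Function.Injective f := injOn_univ.mp hf.injOn
  have hpre : f ⁻¹' t = univ := eq_univ_of_forall fun a => hf.mapsTo (mem_univ a)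
  rw [← ncard_preimage_of_injective_subset_range hinj (inter_subset_left.trans hf.subset_range),
    preimage_inter, hpre, univ_inter]

theorem Set.exists_bijOn_univ_preimage_eq {α β : Type*} [Finite α] [Nonempty β] {t : Set β}
    (ht : t.Finite) (hcard : Nat.card α = t.ncard) {s : Set α} {u : Set β}
    (hs : s.ncard = (t ∩ u).ncard) : ∃ f : α → β, BijOn f univ t ∧ f ⁻¹' u = s := by
  classical
  have hsc : sᶜ.ncard = (t \ u).ncard := by
    rw [ncard_compl, hcard, hs, ← ncard_inter_add_ncard_sdiff_eq_ncard t u ht]; omega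
  obtain ⟨f₁, hf₁⟩ := s.toFinite.exists_bijOn_of_encard_eq (t := t ∩ u)
    (by rw [← s.toFinite.cast_ncard_eq, ← (ht.inter_of_left u).cast_ncard_eq, hs])
  obtain ⟨f₂, hf₂⟩ := sᶜ.toFinite.exists_bijOn_of_encard_eq (t := t \ u)
    (by rw [← sᶜ.toFinite.cast_ncard_eq, ← ht.sdiff.cast_ncard_eq, hsc])
  have hpre : s.piecewise f₁ f₂ ⁻¹' u = s := by
    ext a
    by_cases ha : a ∈ s
    · simp [ha, (hf₁.mapsTo ha).2]
    · simp [ha, (hf₂.mapsTo ha).2]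
  refine ⟨s.piecewise f₁ f₂, ?_, hpre⟩
  have hinj : InjOn (s.piecewise f₁ f₂) (s ∪ sᶜ) := by
    rw [injOn_union disjoint_compl_right]
    refine ⟨hf₁.injOn.congr (piecewise_eqOn ..).symm,
      hf₂.injOn.congr (piecewise_eqOn_compl ..).symm, fun a ha b hb hab => hb ?_⟩
    rw [← hpre, mem_preimage, ← hab, ← mem_preimage, hpre]
    exact ha
  simpa [inter_union_sdiff] using
    (hf₁.congr (piecewise_eqOn ..).symm).union (hf₂.congr (piecewise_eqOn_compl ..).symm) hinj

theorem Nat.ncard_Icc_inter_mod_two (N : ℕ) {r : ℕ} (hr : r < 2) :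
    (Icc 1 N ∩ {x | x % 2 = r}).ncard = (N + r) / 2 := by
  induction N with
  | zero => rw [Icc_eq_empty (by omega), empty_inter, ncard_empty]; omega
  | succ N ih =>
    rw [← insert_Icc_right_eq_Icc_add_one (by omega)]
    by_cases h : (N + 1) % 2 = r
    · rw [insert_inter_of_mem (show N + 1 ∈ {x | x % 2 = r} from h),
        ncard_insert_of_notMem (by simp), ih]
      omega
    · rw [insert_inter_of_notMem (show N + 1 ∉ {x | x % 2 = r} from h), ih]
      omega

theorem starGraph_adj {q : ℕ} {u v : Fin (q + 1)} :
    (starGraph q).Adj u v ↔ u ≠ v ∧ (u = 0 ∨ v = 0) := by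
  simp [starGraph]

theorem ncard_center_side_starGraph {q : ℕ} (σ : Sym2 (Fin (q + 1)) → Prop) :
    {v | v = 0 ∨ σ s(0, v)}.ncard = {e ∈ (starGraph q).edgeSet | σ e}.ncard + 1 := by
  have hedges : {e ∈ (starGraph q).edgeSet | σ e} =
      (fun v => s(0, v)) '' {v | v ≠ 0 ∧ σ s(0, v)} := by
    ext e
    induction e using Sym2.ind with
    | h u v =>
      simp only [SimpleGraph.mem_edgeSet, starGraph_adj, mem_image, mem_ofPred_eq, Sym2.eq_iff]
      constructor
      · rintro ⟨⟨hne, rfl | rfl⟩, hσ⟩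
        · exact ⟨v, ⟨Ne.symm hne, hσ⟩, .inl ⟨rfl, rfl⟩⟩
        · exact ⟨u, ⟨hne, Sym2.eq_swap ▸ hσ⟩, .inr ⟨rfl, rfl⟩⟩
      · rintro ⟨x, ⟨hx, hσ⟩, ⟨rfl, rfl⟩ | ⟨rfl, rfl⟩⟩
        · exact ⟨⟨Ne.symm hx, .inl rfl⟩, hσ⟩
        · exact ⟨⟨hx, .inr rfl⟩, Sym2.eq_swap ▸ hσ⟩
  have hinj : Function.Injective fun v : Fin (q + 1) => s(0, v) := fun _ _ => Sym2.congr_right.mp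
  rw [hedges, ncard_image_of_injective _ hinj,
    ← ncard_insert_of_notMem (a := (0 : Fin (q + 1))) (by simp)]
  congr 1
  ext v
  by_cases hv : v = 0 <;> simp [hv]

theorem isParitySigned_starGraph_iff {q : ℕ} (σ : Sym2 (Fin (q + 1)) → Prop) :
    IsParitySigned (starGraph q) σ ↔ ∃ f : Fin (q + 1) → ℕ, BijOn f univ (Icc 1 (q + 1)) ∧
      f ⁻¹' {x | x % 2 = f 0 % 2} = {v | v = 0 ∨ σ s(0, v)} := by
  unfold IsParitySigned
  rw [Fintype.card_fin]
  refine exists_congr fun f => and_congr_right fun _ => ?_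
  simp only [starGraph_adj, Set.ext_iff, mem_preimage, mem_ofPred_eq]
  constructor
  · intro h v
    by_cases hv : v = 0
    · simp [hv]
    · rw [h 0 v ⟨Ne.symm hv, .inl rfl⟩]
      simp [hv, eq_comm]
  · rintro h u v ⟨hne, rfl | rfl⟩
    · rw [eq_comm, h v]
      simp [Ne.symm hne]
    · rw [Sym2.eq_swap, h u]
      simp [hne]

theorem isParitySigned_starGraph_iff_exists_ncard {q : ℕ} (σ : Sym2 (Fin (q + 1)) → Prop) :
    IsParitySigned (starGraph q) σ ↔
      ∃ r < 2, {v | v = 0 ∨ σ s(0, v)}.ncard = (q + 1 + r) / 2 := by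
  rw [isParitySigned_starGraph_iff]
  constructor
  · rintro ⟨f, hf, hside⟩
    have hr := Nat.mod_lt (f 0) two_pos
    exact ⟨f 0 % 2, hr, by rw [← hside, hf.ncard_preimage, Nat.ncard_Icc_inter_mod_two _ hr]⟩
  · rintro ⟨r, hr, hside⟩
    obtain ⟨f, hf, hpre⟩ := exists_bijOn_univ_preimage_eq (α := Fin (q + 1))
      (finite_Icc 1 (q + 1)) (by simp) (u := {x | x % 2 = r})
      (by rw [hside, Nat.ncard_Icc_inter_mod_two _ hr])
    have hf0 : f 0 % 2 = r := by
      change 0 ∈ f ⁻¹' {x | x % 2 = r}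
      rw [hpre]
      exact Or.inl rfl
    exact ⟨f, hf, hf0 ▸ hpre⟩

theorem signed_star_parity_signed_iff_general (m n : ℕ) (σ : Sym2 (Fin (m + n + 1)) → Prop)
    (hpos : {e ∈ (starGraph (m + n)).edgeSet | σ e}.ncard = m) :
    IsParitySigned (starGraph (m + n)) σ ↔
      (Even (m + n) ∧ (n = m ∨ n = m + 2)) ∨ (Odd (m + n) ∧ (n = m ∨ n = m + 1)) := by
  rw [isParitySigned_starGraph_iff_exists_ncard, ncard_center_side_starGraph, hpos,
    Nat.even_iff, Nat.odd_iff]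
  constructor
  · rintro ⟨r, hr, hside⟩
    omega
  · intro h
    by_cases hn : n = m + 2
    · exact ⟨0, two_pos, by omega⟩
    · exact ⟨1, one_lt_two, by omega⟩

/-- A signed star `K_{1,m+n}` with exactly `m` positive and exactly `n`
negative edges is a parity signed graph iff: `n = m` or `n = m + 2` when `m + n` is
even, or `n = m` or `n = m + 1` when `m + n` is odd. -/
theorem signed_star_parity_signed_iff (m n : ℕ) (σ : Sym2 (Fin (m + n + 1)) → Prop)
    (hpos : {e ∈ (starGraph (m + n)).edgeSet | σ e}.ncard = m)
    (hneg : {e ∈ (starGraph (m + n)).edgeSet | ¬ σ e}.ncard = n) :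
    IsParitySigned (starGraph (m + n)) σ ↔
      (Even (m + n) ∧ (n = m ∨ n = m + 2)) ∨ (Odd (m + n) ∧ (n = m ∨ n = m + 1)) :=
  signed_star_parity_signed_iff_general m n σ hpos
end

section
/- Let B⁺(m, n) be the signed bistar consisting of adjacent vertices u and v, m pendant vertices adjacent to u, and n pendant vertices adjacent to v, where the edge uv is positive, all m pendant edges at u are positive, and all n pendant edges at v are negative. Then B⁺(m, n) is a parity signed graph if and only if: n = m + 1 or n = m + 3, when m + n is odd; or n = m + 2, when m + n is even. -/
/-- The bistar `B(m, n)`: adjacent centres `u = Sum.inl 0` and `v = Sum.inr 0`, with the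
`m` pendant vertices `Sum.inl k` (`k ≠ 0`) adjacent to `u` and the `n` pendant vertices
`Sum.inr k` (`k ≠ 0`) adjacent to `v`. -/
def bistar (m n : ℕ) : SimpleGraph (Fin (m + 1) ⊕ Fin (n + 1)) :=
  SimpleGraph.fromRel (fun a b =>
    (a = Sum.inl 0 ∧ (∃ k : Fin (m + 1), b = Sum.inl k)) ∨
    (a = Sum.inr 0 ∧ (∃ k : Fin (n + 1), b = Sum.inr k)) ∨
    (a = Sum.inl 0 ∧ b = Sum.inr 0))

/-- The signs of `B⁺(m, n)`: the centre edge `uv` and the pendant edges at `u` are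
positive (these are exactly the edges meeting the `u`-side), and the pendant edges at
`v` are negative. -/
def bplusSign (m n : ℕ) : Sym2 (Fin (m + 1) ⊕ Fin (n + 1)) → Prop :=
  fun e => ∃ k : Fin (m + 1), (Sum.inl k : Fin (m + 1) ⊕ Fin (n + 1)) ∈ e

/-! The sign of `B⁺(m, n)` is the cut signature of the set `P` of pendant vertices at `v`: an
edge is negative iff exactly one endpoint lies in `P`. On a connected graph a labelling `f`
induces the cut signature of `P` iff the even-labelled vertices are exactly `P` or exactly its
complement. As `{1, …, N}` contains `⌊N/2⌋` even numbers and any set of that size can be made the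
set of even labels, `B⁺(m, n)` is parity signed iff `n` or `m + 2` equals `⌊(m + n + 2)/2⌋`. -/

open Finset

lemma Nat.card_filter_even_Icc_one (N : ℕ) : #{x ∈ Icc 1 N | Even x} = N / 2 := by
  simp only [even_iff_two_dvd]
  exact (Icc_add_one_left_eq_Ioc 0 N).symm ▸ Nat.Ioc_filter_dvd_card_eq_div N 2

lemma Set.BijOn.card_filter_comp_s10 {V β : Type*} [Fintype V] {f : V → β} {s : Finset β}
    (hf : Set.BijOn f Set.univ s) (p : β → Prop) [DecidablePred p] :
    #{x | p (f x)} = #{b ∈ s | p b} :=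
  card_nbij f
    (fun x hx => mem_filter.2 ⟨hf.mapsTo (Set.mem_univ x), (mem_filter.1 hx).2⟩)
    (hf.injOn.mono (Set.subset_univ _))
    (fun b hb => by
      obtain ⟨x, -, rfl⟩ := hf.surjOn (mem_filter.1 hb).1
      exact ⟨x, by simpa using (mem_filter.1 hb).2, rfl⟩)

lemma exists_bijOn_of_card_filter_eq {V β : Type*} [Fintype V] {s : Finset β}
    (hs : #s = Fintype.card V) (p : β → Prop) [DecidablePred p] (q : V → Prop) [DecidablePred q]
    (h : #{x | q x} = #{b ∈ s | p b}) :
    ∃ f : V → β, Set.BijOn f Set.univ s ∧ ∀ x, p (f x) ↔ q x := by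
  have hpos : Fintype.card {x // q x} = Fintype.card {b : s // p b} := by
    simpa [Fintype.card_subtype, filter_attach] using h
  have hneg : Fintype.card {x // ¬ q x} = Fintype.card {b : s // ¬ p b} := by
    rw [Fintype.card_subtype_compl, Fintype.card_subtype_compl, hpos, Fintype.card_coe, hs]
  let e₁ := Fintype.equivOfCardEq hpos
  let e₂ := Fintype.equivOfCardEq hneg
  let e : V ≃ s := (Equiv.sumCompl q).symm.trans
    ((Equiv.sumCongr e₁ e₂).trans (Equiv.sumCompl fun b : s => p b))
  refine ⟨fun x => e x, ⟨fun x _ => (e x).2, fun x _ y _ hxy => e.injective (Subtype.ext hxy),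
    fun b hb => ⟨e.symm ⟨b, hb⟩, Set.mem_univ _, by simp⟩⟩, fun x => ?_⟩
  by_cases hx : q x
  · simpa [e, Equiv.sumCompl_symm_apply_of_pos hx, hx] using (e₁ ⟨x, hx⟩).2
  · simpa [e, Equiv.sumCompl_symm_apply_of_neg hx, hx] using (e₂ ⟨x, hx⟩).2

lemma exists_bijOn_Icc_even_iff {V : Type*} [Fintype V] (q : V → Prop) [DecidablePred q] :
    (∃ f : V → ℕ, Set.BijOn f Set.univ (Set.Icc 1 (Fintype.card V)) ∧ ∀ x, Even (f x) ↔ q x) ↔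
      #{x | q x} = Fintype.card V / 2 := by
  rw [← Nat.card_filter_even_Icc_one, ← coe_Icc]
  constructor
  · rintro ⟨f, hf, hq⟩
    rw [← hf.card_filter_comp_s10 Even]
    simp only [hq]
  · exact exists_bijOn_of_card_filter_eq (by simp) Even q

lemma Nat.mod_two_eq_mod_two_iff_even_iff (a b : ℕ) : a % 2 = b % 2 ↔ (Even a ↔ Even b) := by
  rw [Nat.even_iff, Nat.even_iff]
  omega

lemma SimpleGraph.Preconnected.iff_of_forall_adj {V : Type*} {G : SimpleGraph V}
    (hG : G.Preconnected) {d : V → Prop} (h : ∀ x y, G.Adj x y → (d x ↔ d y)) (x y : V) :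
    d x ↔ d y := by
  obtain ⟨w⟩ := hG x y
  induction w with
  | nil => rfl
  | cons hadj _ ih => exact (h _ _ hadj).trans ih

lemma isParitySigned_iff_exists_even_iff_mem {V : Type*} [Fintype V] {G : SimpleGraph V}
    (hG : G.Preconnected) {σ : Sym2 V → Prop} (A : Finset V)
    (hσ : ∀ x y, G.Adj x y → (σ s(x, y) ↔ (x ∈ A ↔ y ∈ A))) :
    IsParitySigned G σ ↔ ∃ f : V → ℕ, Set.BijOn f Set.univ (Set.Icc 1 (Fintype.card V)) ∧
      ((∀ x, Even (f x) ↔ x ∈ A) ∨ ∀ x, Even (f x) ↔ x ∉ A) := by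
  simp only [IsParitySigned, Nat.mod_two_eq_mod_two_iff_even_iff]
  refine exists_congr fun f => and_congr_right fun _ => ⟨fun hf => ?_, fun hf x y hxy => ?_⟩
  · have hconst := hG.iff_of_forall_adj (d := fun x => Even (f x) ↔ x ∈ A) fun x y hxy => by
      have := (hσ x y hxy).symm.trans (hf x y hxy)
      tauto
    by_cases hall : ∀ x, Even (f x) ↔ x ∈ A
    · exact .inl hall
    · obtain ⟨x₀, hx₀⟩ := not_forall.1 hall
      exact .inr fun x => by have := hconst x x₀; tauto
  · rw [hσ x y hxy]
    rcases hf with hA | hA <;> simp only [hA, not_iff_not]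

theorem isParitySigned_iff_card_eq {V : Type*} [Fintype V] {G : SimpleGraph V}
    (hG : G.Preconnected) {σ : Sym2 V → Prop} (A : Finset V)
    (hσ : ∀ x y, G.Adj x y → (σ s(x, y) ↔ (x ∈ A ↔ y ∈ A))) :
    IsParitySigned G σ ↔
      #A = Fintype.card V / 2 ∨ #A = Fintype.card V - Fintype.card V / 2 := by
  classical
  rw [isParitySigned_iff_exists_even_iff_mem hG A hσ]
  simp only [and_or_left, exists_or]
  rw [exists_bijOn_Icc_even_iff (· ∈ A), exists_bijOn_Icc_even_iff (· ∉ A)]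
  have hsplit := card_filter_add_card_filter_not (s := univ) (· ∈ A)
  simp only [filter_univ_mem, card_univ] at hsplit ⊢
  omega

def bistarRightPendants (m n : ℕ) : Finset (Fin (m + 1) ⊕ Fin (n + 1)) :=
  (univ.erase 0).map .inr

lemma card_bistarRightPendants (m n : ℕ) : #(bistarRightPendants m n) = n := by
  simp [bistarRightPendants]

lemma bistar_preconnected (m n : ℕ) : (bistar m n).Preconnected := by
  have huv : (bistar m n).Reachable (.inl 0) (.inr 0) := SimpleGraph.Adj.reachable (by simp [bistar])
  have hu : ∀ x, (bistar m n).Reachable (.inl 0) x := by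
    rintro (k | k) <;> obtain rfl | hk := eq_or_ne k 0
    · rfl
    · exact SimpleGraph.Adj.reachable (by simp [bistar, hk.symm])
    · exact huv
    · exact huv.trans (SimpleGraph.Adj.reachable (by simp [bistar, hk.symm]))
  exact fun x y => (hu x).symm.trans (hu y)

lemma bplusSign_iff_mem_iff_mem {m n : ℕ} {x y : Fin (m + 1) ⊕ Fin (n + 1)}
    (h : (bistar m n).Adj x y) :
    bplusSign m n s(x, y) ↔ (x ∈ bistarRightPendants m n ↔ y ∈ bistarRightPendants m n) := by
  rcases x with a | a <;> rcases y with b | b <;>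
    simp [bistar, bplusSign, bistarRightPendants] at h ⊢ <;> grind

/-- The signed bistar `B⁺(m, n)` (edge `uv` positive, the `m` pendant
edges at `u` positive, the `n` pendant edges at `v` negative) is a parity signed graph
iff `n = m + 1` or `n = m + 3` when `m + n` is odd, or `n = m + 2` when `m + n` is
even. -/
theorem bistar_bplus_parity_signed_iff (m n : ℕ) :
    IsParitySigned (bistar m n) (bplusSign m n) ↔
      (Odd (m + n) ∧ (n = m + 1 ∨ n = m + 3)) ∨ (Even (m + n) ∧ n = m + 2) := by
  rw [isParitySigned_iff_card_eq (bistar_preconnected m n) _ fun _ _ => bplusSign_iff_mem_iff_mem,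
    card_bistarRightPendants, Fintype.card_sum, Fintype.card_fin, Fintype.card_fin,
    Nat.odd_iff, Nat.even_iff]
  omega
end

section
/- Let B*(m, n), with m ≤ n, be the negative homogeneous signed bistar consisting of adjacent vertices u and v, m pendant vertices adjacent to u, and n pendant vertices adjacent to v, where every edge (including uv) is negative. Then B*(m, n) is a parity signed graph if and only if n = m or n = m + 1. -/
open Finset Function

theorem card_le_of_injective_of_mod_two_eq {α : Type*} [Fintype α] {f : α → ℕ} {N r : ℕ}
    (hinj : Injective f) (hmaps : ∀ a, f a ∈ Set.Icc 1 N) (hr : ∀ a, f a % 2 = r) :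
    Fintype.card α ≤ (N + 1) / 2 := by
  have hhalf : Set.MapsTo (fun a => (f a + 1) / 2) (univ : Finset α) (Icc 1 ((N + 1) / 2)) := by
    intro a _
    have := hmaps a
    simp only [Set.mem_Icc, coe_Icc] at this ⊢
    omega
  have hinj' : Set.InjOn (fun a => (f a + 1) / 2) (univ : Finset α) := by
    intro a _ b _ hab
    have := hr a
    have := hr b
    exact hinj (by simp only at hab; omega)
  simpa using card_le_card_of_injOn _ hhalf hinj'

def interleave {a b : ℕ} : Fin a ⊕ Fin b → ℕ :=
  Sum.elim (fun i => 2 * i + 2) (fun j => 2 * j + 1)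

theorem interleave_mod_two_eq_iff {a b : ℕ} (x y : Fin a ⊕ Fin b) :
    interleave x % 2 = interleave y % 2 ↔ x.isLeft = y.isLeft := by
  rcases x with x | x <;> rcases y with y | y <;> simp [interleave]

theorem bijOn_interleave {a b : ℕ} (hab : a ≤ b) (hba : b ≤ a + 1) :
    Set.BijOn (interleave (a := a) (b := b)) Set.univ (Set.Icc 1 (a + b)) := by
  refine ⟨?_, ?_, ?_⟩
  · rintro (i | j) - <;> simp [interleave] <;> omega
  · rintro (i | j) - (i' | j') - h <;> simp [interleave] at h ⊢ <;> omega
  · rintro x ⟨hx1, hx2⟩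
    rcases Nat.even_or_odd' x with ⟨k, rfl | rfl⟩
    · exact ⟨.inl ⟨k - 1, by omega⟩, trivial, by simp [interleave]; omega⟩
    · exact ⟨.inr ⟨k, by omega⟩, trivial, by simp [interleave]⟩

section Bistar

variable {m n : ℕ}

/-- Exchanging the two centres moves the bipartition classes `{u} ∪ leaves(v)` and
`{v} ∪ leaves(u)` of the bistar onto the summands `Sum.inr` and `Sum.inl`. -/
def centreSwap (m n : ℕ) : Equiv.Perm (Fin (m + 1) ⊕ Fin (n + 1)) :=
  Equiv.swap (.inl 0) (.inr 0)

theorem bistar_adj_centres : (bistar m n).Adj (.inl 0) (.inr 0) := by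
  simp [bistar]

theorem bistar_adj_inr_zero {k : Fin (n + 1)} (hk : k ≠ 0) :
    (bistar m n).Adj (.inr 0) (.inr k) := by
  simp [bistar, Ne.symm hk]

theorem isLeft_centreSwap_ne_of_adj {a b : Fin (m + 1) ⊕ Fin (n + 1)} (h : (bistar m n).Adj a b) :
    (centreSwap m n a).isLeft ≠ (centreSwap m n b).isLeft := by
  simp only [bistar, SimpleGraph.fromRel_adj] at h
  obtain ⟨hne, (⟨rfl, k, rfl⟩ | ⟨rfl, k, rfl⟩ | ⟨rfl, rfl⟩) |
    (⟨rfl, k, rfl⟩ | ⟨rfl, k, rfl⟩ | ⟨rfl, rfl⟩)⟩ := h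
  all_goals simp_all [centreSwap, Equiv.swap_apply_def, Ne.symm hne]

theorem mod_two_centreSwap_inr_eq {f : Fin (m + 1) ⊕ Fin (n + 1) → ℕ}
    (hf : ∀ a b, (bistar m n).Adj a b → f a % 2 ≠ f b % 2) (k : Fin (n + 1)) :
    f (centreSwap m n (.inr k)) % 2 = f (.inl 0) % 2 := by
  rcases eq_or_ne k 0 with rfl | hk
  · simp [centreSwap]
  · have h₁ := hf _ _ (bistar_adj_centres (m := m) (n := n))
    have h₂ := hf _ _ (bistar_adj_inr_zero (m := m) hk)
    rw [centreSwap, Equiv.swap_apply_of_ne_of_ne (by simp) (by simpa using hk)]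
    omega

end Bistar

/-- The all-negative signed bistar `B*(m, n)` with `m ≤ n` is a parity
signed graph iff `n = m` or `n = m + 1`. -/
theorem bistar_all_negative_parity_signed_iff (m n : ℕ) (hmn : m ≤ n) :
    IsParitySigned (bistar m n) (fun _ => False) ↔ n = m ∨ n = m + 1 := by
  have hcard : Fintype.card (Fin (m + 1) ⊕ Fin (n + 1)) = m + 1 + (n + 1) := by simp
  simp only [IsParitySigned, hcard, false_iff]
  constructor
  · rintro ⟨f, hf, hneg⟩
    have hclass : n + 1 ≤ (m + 1 + (n + 1) + 1) / 2 := by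
      simpa using card_le_of_injective_of_mod_two_eq (f := f ∘ centreSwap m n ∘ Sum.inr)
        ((Set.injOn_univ.mp hf.injOn).comp ((centreSwap m n).injective.comp Sum.inr_injective))
        (fun k => hf.mapsTo trivial) (mod_two_centreSwap_inr_eq hneg)
    omega
  · intro h
    refine ⟨interleave ∘ centreSwap m n,
      (bijOn_interleave (by omega) (by omega)).comp (Set.bijOn_univ.mpr (centreSwap m n).bijective),
      fun a b hab => ?_⟩
    simpa [interleave_mod_two_eq_iff] using isLeft_centreSwap_ne_of_adj hab
end

section
/- For every n ≥ 2, the rna number of the path P_n on n vertices equals 1, and the adhika number of P_n equals n − 2; that is, over all bijections f : V(P_n) → {1, …, n}, the minimum number of edges with opposite-parity labels is 1 and the maximum number of edges with same-parity labels is n − 2. -/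
open SimpleGraph

theorem SimpleGraph.edgeSet_pathGraph (m : ℕ) :
    (pathGraph (m + 1)).edgeSet = Set.range fun i : Fin m => s(i.castSucc, i.succ) := by
  ext e
  induction e using Sym2.ind with
  | _ u v =>
    simp only [mem_edgeSet, pathGraph_adj, Set.mem_range, Sym2.eq_iff, Fin.ext_iff,
      Fin.val_castSucc, Fin.val_succ]
    constructor
    · rintro (h | h)
      · exact ⟨⟨u, by omega⟩, .inl ⟨rfl, h⟩⟩
      · exact ⟨⟨v, by omega⟩, .inr ⟨rfl, h⟩⟩
    · rintro ⟨i, ⟨hu, hv⟩ | ⟨hv, hu⟩⟩ <;> omega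

theorem SimpleGraph.ncard_sep_edgeSet_pathGraph (m : ℕ) (p : Sym2 (Fin (m + 1)) → Prop) :
    {e ∈ (pathGraph (m + 1)).edgeSet | p e}.ncard =
      {i : Fin m | p s(i.castSucc, i.succ)}.ncard := by
  have hinj : Function.Injective fun i : Fin m => s(i.castSucc, i.succ) := by
    intro i j hij
    simp only [Sym2.eq_iff, Fin.ext_iff, Fin.val_castSucc, Fin.val_succ] at hij
    omega
  rw [edgeSet_pathGraph, ← Set.ncard_image_of_injective _ hinj]
  congr 1
  ext e
  simp only [Set.mem_ofPred_eq, Set.mem_range, Set.mem_image]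
  grind

section

variable {V : Type*} [Fintype V] {G : SimpleGraph V} {f : V → ℕ}

theorem negCount_add_posCount (G : SimpleGraph V) (f : V → ℕ) :
    negCount G f + posCount G f = G.edgeSet.ncard :=
  Set.ncard_inter_add_ncard_sdiff_eq_ncard G.edgeSet {e | diffParity f e}

theorem mod_two_eq_of_negCount_eq_zero (hG : G.Preconnected) (hf : negCount G f = 0)
    (u v : V) : f u % 2 = f v % 2 := by
  have hadj : ∀ a b, G.Adj a b → f a % 2 = f b % 2 := by
    intro a b hab
    by_contra hne
    exact Set.eq_empty_iff_forall_notMem.mp ((Set.ncard_eq_zero).mp hf) s(a, b) ⟨hab, hne⟩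
  induction (reachable_iff_reflTransGen u v).mp (hG u v) with
  | refl => rfl
  | tail _ hbc ih => exact ih.trans (hadj _ _ hbc)

theorem one_le_negCount (hG : G.Preconnected) (hV : 2 ≤ Fintype.card V)
    (hf : Set.BijOn f Set.univ (Set.Icc 1 (Fintype.card V))) : 1 ≤ negCount G f := by
  obtain ⟨u, -, hu⟩ := hf.surjOn (Set.mem_Icc.mpr ⟨le_rfl, by omega⟩ : 1 ∈ Set.Icc 1 _)
  obtain ⟨v, -, hv⟩ := hf.surjOn (Set.mem_Icc.mpr ⟨by omega, hV⟩ : 2 ∈ Set.Icc 1 _)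
  by_contra! h
  have := mod_two_eq_of_negCount_eq_zero hG (Nat.lt_one_iff.mp h) u v
  simp [hu, hv] at this

end

def oddsFirst (N : ℕ) (i : Fin N) : ℕ :=
  if (i : ℕ) < (N + 1) / 2 then 2 * i + 1 else 2 * (i - (N + 1) / 2) + 2

theorem bijOn_oddsFirst (N : ℕ) : Set.BijOn (oddsFirst N) Set.univ (Set.Icc 1 N) := by
  refine ⟨fun i _ => ?_, fun i _ j _ hij => ?_, fun l hl => ?_⟩
  · have := i.isLt
    simp only [oddsFirst, Set.mem_Icc]
    split_ifs <;> omega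
  · have := i.isLt
    have := j.isLt
    simp only [oddsFirst] at hij
    ext
    split_ifs at hij <;> omega
  · obtain ⟨hl1, hlN⟩ := Set.mem_Icc.mp hl
    obtain ⟨j, rfl | rfl⟩ := Nat.even_or_odd' l
    · refine ⟨⟨(N + 1) / 2 + (j - 1), by omega⟩, trivial, ?_⟩
      simp only [oddsFirst]
      split_ifs <;> omega
    · refine ⟨⟨j, by omega⟩, trivial, ?_⟩
      simp only [oddsFirst]
      split_ifs <;> omega

theorem negCount_pathGraph_oddsFirst (m : ℕ) :
    negCount (pathGraph (m + 2)) (oddsFirst (m + 2)) = 1 := by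
  rw [negCount, ncard_sep_edgeSet_pathGraph, Set.ncard_eq_one]
  refine ⟨⟨(m + 3) / 2 - 1, by omega⟩, ?_⟩
  ext i
  have := i.isLt
  simp only [Set.mem_ofPred_eq, Set.mem_singleton_iff, diffParity, Sym2.lift_mk, oddsFirst,
    Fin.ext_iff, Fin.val_castSucc, Fin.val_succ]
  split_ifs <;> omega

/-- For `n ≥ 2`, the rna number of the path `P_n` is `1` and its
adhika number is `n - 2`. -/
theorem rna_adhika_path (n : ℕ) (hn : 2 ≤ n) :
    rnaNumber (SimpleGraph.pathGraph n) = 1 ∧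
      adhikaNumber (SimpleGraph.pathGraph n) = n - 2 := by
  obtain ⟨m, rfl⟩ := Nat.exists_eq_add_of_le' hn
  have hbij : Set.BijOn (oddsFirst (m + 2)) Set.univ
      (Set.Icc 1 (Fintype.card (Fin (m + 2)))) := by
    simpa using bijOn_oddsFirst (m + 2)
  have hedges : (pathGraph (m + 2)).edgeSet.ncard = m + 1 := by
    simpa using ncard_sep_edgeSet_pathGraph (m + 1) fun _ => True
  have hlower {f : Fin (m + 2) → ℕ} (hf : Set.BijOn f Set.univ (Set.Icc 1 (Fintype.card _))) :
      1 ≤ negCount (pathGraph (m + 2)) f :=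
    one_le_negCount (pathGraph_preconnected _) (by simp) hf
  constructor
  · exact IsLeast.csInf_eq
      ⟨⟨_, hbij, negCount_pathGraph_oddsFirst m⟩, fun _ ⟨f, hf, hk⟩ => hk ▸ hlower hf⟩
  · refine IsGreatest.csSup_eq ⟨⟨_, hbij, ?_⟩, fun _ ⟨f, hf, hk⟩ => ?_⟩
    · have := negCount_add_posCount (pathGraph (m + 2)) (oddsFirst (m + 2))
      have := negCount_pathGraph_oddsFirst m
      omega
    · have := negCount_add_posCount (pathGraph (m + 2)) f
      have := hlower hf
      omega
end

section
/- For every n ≥ 3, the rna number of the cycle C_n on n vertices equals 2, and the adhika number of C_n equals n − 2; that is, over all bijections f : V(C_n) → {1, …, n}, the minimum number of edges with opposite-parity labels is 2 and the maximum number of edges with same-parity labels is n − 2. -/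
/-!
Labels `1` and `2` have different parities, so the parity of the labels is not constant along
the cycle. It cannot change across only one edge either, since the remaining edges form a
Hamiltonian path; hence every labelling has at least two negative edges, and listing the odd
labels before the even ones attains two. Positive and negative edges partition the `n` edges,
so the maximum number of positive edges is `n` minus the minimum number of negative ones.
-/

open Finset SimpleGraph

section Labelling

variable {V : Type*} [Fintype V] (G : SimpleGraph V)

theorem posCount_add_negCount (f : V → ℕ) : posCount G f + negCount G f = G.edgeSet.ncard :=
  (add_comm _ _).trans <|
    Set.ncard_inter_add_ncard_sdiff_eq_ncard G.edgeSet {e | diffParity f e} G.edgeSet.toFinite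

theorem isGreatest_posCount_of_isLeast_negCount {m : ℕ}
    (h : IsLeast {k | ∃ f : V → ℕ, Set.BijOn f Set.univ (Set.Icc 1 (Fintype.card V)) ∧
      negCount G f = k} m) :
    IsGreatest {k | ∃ f : V → ℕ, Set.BijOn f Set.univ (Set.Icc 1 (Fintype.card V)) ∧
      posCount G f = k} (G.edgeSet.ncard - m) := by
  obtain ⟨⟨f₀, hf₀, rfl⟩, hle⟩ := h
  refine ⟨⟨f₀, hf₀, by rw [← posCount_add_negCount G f₀, Nat.add_sub_cancel]⟩, ?_⟩
  rintro _ ⟨f, hf, rfl⟩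
  have := hle ⟨f, hf, rfl⟩
  have := posCount_add_negCount G f
  omega

end Labelling

def oddsThenEvens (n i : ℕ) : ℕ :=
  if i < (n + 1) / 2 then 2 * i + 1 else 2 * (i - (n + 1) / 2) + 2

theorem bijOn_oddsThenEvens (n : ℕ) :
    Set.BijOn (fun i : Fin n => oddsThenEvens n i) Set.univ (Set.Icc 1 n) := by
  refine ⟨fun i _ => ?_, fun a _ b _ hab => Fin.ext ?_, fun k hk => ?_⟩
  · have := i.isLt
    simp only [oddsThenEvens, Set.mem_Icc]
    split_ifs <;> omega
  · have := a.isLt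
    have := b.isLt
    simp only [oddsThenEvens] at hab
    split_ifs at hab <;> omega
  · rw [Set.mem_Icc] at hk
    rcases Nat.even_or_odd k with ⟨j, rfl⟩ | ⟨j, rfl⟩
    · refine ⟨⟨(n + 1) / 2 + j - 1, by omega⟩, trivial, ?_⟩
      simp only [oddsThenEvens]
      split_ifs <;> omega
    · refine ⟨⟨j, by omega⟩, trivial, ?_⟩
      simp only [oddsThenEvens]
      split_ifs <;> omega

section Cycle

open Fin.NatCast Fin.CommRing

theorem Fin.apply_eq_apply_add_one_of_forall_ne {α : Type*} {n : ℕ} [NeZero n] {g : Fin n → α}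
    {j : Fin n} (h : ∀ i, i ≠ j → g i = g (i + 1)) (v : Fin n) : g v = g (j + 1) := by
  have step : ∀ k : ℕ, g (j + 1 + k) = g (j + 1) := by
    intro k
    induction k with
    | zero => simp
    | succ k ih =>
      by_cases hk : j + 1 + k = j
      · rw [Nat.cast_succ, ← add_assoc, hk]
      · rw [Nat.cast_succ, ← add_assoc, ← h _ hk, ih]
  simpa using step (v - (j + 1)).val

theorem Fin.two_le_card_apply_ne_apply_add_one {α : Type*} [DecidableEq α] {n : ℕ} [NeZero n]
    {g : Fin n → α} {u w : Fin n} (huw : g u ≠ g w) : 2 ≤ #{i | g i ≠ g (i + 1)} := by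
  by_contra! hlt
  obtain ⟨j, hj⟩ := card_le_one_iff_subset_singleton.mp (Nat.le_of_lt_succ hlt)
  have hconst : ∀ i, i ≠ j → g i = g (i + 1) := fun i hij => by
    by_contra hi
    exact hij (mem_singleton.mp (hj (mem_filter.mpr ⟨mem_univ i, hi⟩)))
  exact huw ((apply_eq_apply_add_one_of_forall_ne hconst u).trans
    (apply_eq_apply_add_one_of_forall_ne hconst w).symm)

variable {n : ℕ} [NeZero n]

theorem Fin.val_one_of_two_le (hn : 2 ≤ n) : (1 : Fin n).val = 1 := by
  rw [Fin.val_one', Nat.mod_eq_of_lt (by omega)]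

theorem cycleGraph_edgeSet_eq_range (hn : 3 ≤ n) :
    (cycleGraph n).edgeSet = Set.range fun i : Fin n => s(i, i + 1) := by
  ext e
  induction e with
  | _ u v =>
    rw [mem_edgeSet, cycleGraph_adj', Set.mem_range,
      ← Fin.val_one_of_two_le (n := n) (by omega), ← Fin.ext_iff, ← Fin.ext_iff,
      sub_eq_iff_eq_add', sub_eq_iff_eq_add']
    constructor
    · rintro (rfl | rfl)
      exacts [⟨v, Sym2.eq_swap⟩, ⟨u, rfl⟩]
    · rintro ⟨i, hi⟩
      rcases Sym2.eq_iff.mp hi with ⟨rfl, rfl⟩ | ⟨rfl, rfl⟩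
      exacts [Or.inr rfl, Or.inl rfl]

theorem injective_sym2_mk_self_add_one (hn : 3 ≤ n) :
    Function.Injective fun i : Fin n => s(i, i + 1) := by
  intro i j h
  rcases Sym2.eq_iff.mp h with ⟨hij, -⟩ | ⟨hij, hji⟩
  · exact hij
  · -- otherwise `i = i + 2` in `Fin n`, impossible for `n ≥ 3`
    have h2 : i + (1 + 1) = i + 0 := by rw [add_zero, ← add_assoc, hji, ← hij]
    replace h2 := congrArg Fin.val (add_left_cancel h2)
    rw [Fin.val_add, Fin.val_one_of_two_le (by omega), Nat.mod_eq_of_lt (by omega),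
      Fin.val_zero] at h2
    omega

theorem ncard_sep_cycleGraph_edgeSet (hn : 3 ≤ n) (p : Sym2 (Fin n) → Prop) [DecidablePred p] :
    {e ∈ (cycleGraph n).edgeSet | p e}.ncard = #{i : Fin n | p s(i, i + 1)} := by
  rw [← Set.ncard_coe_finset,
    ← Set.ncard_image_of_injective _ (injective_sym2_mk_self_add_one hn),
    cycleGraph_edgeSet_eq_range hn]
  congr 1
  ext e
  simp only [Set.mem_ofPred_eq, Set.mem_range, coe_filter, mem_univ, true_and, Set.mem_image]
  constructor
  · rintro ⟨⟨i, rfl⟩, hp⟩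
    exact ⟨i, hp, rfl⟩
  · rintro ⟨i, hp, rfl⟩
    exact ⟨⟨i, rfl⟩, hp⟩

theorem ncard_cycleGraph_edgeSet (hn : 3 ≤ n) : (cycleGraph n).edgeSet.ncard = n := by
  simpa using ncard_sep_cycleGraph_edgeSet hn fun _ => True

theorem negCount_cycleGraph (hn : 3 ≤ n) (f : Fin n → ℕ) :
    negCount (cycleGraph n) f = #{i : Fin n | f i % 2 ≠ f (i + 1) % 2} := by
  classical
  rw [negCount, ncard_sep_cycleGraph_edgeSet hn]
  congr

theorem two_le_negCount_cycleGraph (hn : 3 ≤ n) {f : Fin n → ℕ}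
    (hf : Set.BijOn f Set.univ (Set.Icc 1 n)) : 2 ≤ negCount (cycleGraph n) f := by
  obtain ⟨u, -, hu⟩ := hf.surjOn (Set.mem_Icc.mpr ⟨le_rfl, by omega⟩ : 1 ∈ Set.Icc 1 n)
  obtain ⟨w, -, hw⟩ := hf.surjOn (Set.mem_Icc.mpr ⟨by omega, by omega⟩ : 2 ∈ Set.Icc 1 n)
  rw [negCount_cycleGraph hn]
  exact Fin.two_le_card_apply_ne_apply_add_one (g := fun i => f i % 2) (u := u) (w := w)
    (by simp [hu, hw])

theorem card_parity_ne_oddsThenEvens (hn : 2 ≤ n) :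
    #{i : Fin n | oddsThenEvens n i % 2 ≠ oddsThenEvens n ↑(i + 1) % 2} = 2 := by
  have hsucc (i : Fin n) : (i + 1).val = (i.val + 1) % n := by
    rw [Fin.val_add, Fin.val_one_of_two_le hn]
  -- the parity changes exactly after the last odd label and after the last even one
  have hchanges :
      ({i : Fin n | oddsThenEvens n i % 2 ≠ oddsThenEvens n ↑(i + 1) % 2} : Finset _) =
        {⟨(n + 1) / 2 - 1, by omega⟩, ⟨n - 1, by omega⟩} := by
    ext i
    have hi := i.isLt
    simp only [oddsThenEvens, mem_filter, mem_univ, true_and, mem_insert, mem_singleton,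
      Fin.ext_iff, hsucc]
    rcases Nat.lt_or_ge i.val (n - 1) with h | h
    · rw [Nat.mod_eq_of_lt (show i.val + 1 < n by omega)]
      split_ifs <;> omega
    · rw [show i.val + 1 = n by omega, Nat.mod_self]
      split_ifs <;> omega
  rw [hchanges, card_pair (by simp only [ne_eq, Fin.mk.injEq]; omega)]

theorem isLeast_negCount_cycleGraph (hn : 3 ≤ n) :
    IsLeast {k | ∃ f : Fin n → ℕ, Set.BijOn f Set.univ (Set.Icc 1 (Fintype.card (Fin n))) ∧
      negCount (cycleGraph n) f = k} 2 := by
  simp only [Fintype.card_fin]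
  refine ⟨⟨_, bijOn_oddsThenEvens n, ?_⟩, ?_⟩
  · rw [negCount_cycleGraph hn, card_parity_ne_oddsThenEvens (by omega)]
  · rintro _ ⟨f, hf, rfl⟩
    exact two_le_negCount_cycleGraph hn hf

end Cycle

/-- For `n ≥ 3`, the rna number of the cycle `C_n` is `2` and its
adhika number is `n - 2`. -/
theorem rna_adhika_cycle (n : ℕ) (hn : 3 ≤ n) :
    rnaNumber (SimpleGraph.cycleGraph n) = 2 ∧
      adhikaNumber (SimpleGraph.cycleGraph n) = n - 2 := by
  have : NeZero n := ⟨by omega⟩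
  have hleast := isLeast_negCount_cycleGraph hn
  refine ⟨hleast.csInf_eq, ?_⟩
  rw [adhikaNumber, (isGreatest_posCount_of_isLeast_negCount _ hleast).csSup_eq,
    ncard_cycleGraph_edgeSet hn]
end

section
/- For every n ≥ 4, the rna number of the wheel W_n on n vertices equals ⌊(n+4)/2⌋; that is, the minimum over all bijections f : V(W_n) → {1, …, n} of the number of edges whose endpoints receive labels of opposite parity is ⌊(n+4)/2⌋. -/
/-- The wheel on `m + 1` vertices: a hub (`none`) adjacent to every vertex of a cycle
`C_m` on the vertices `some i`. -/
def wheelGraph (m : ℕ) : SimpleGraph (Option (Fin m)) :=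
  SimpleGraph.fromRel (fun a b =>
    (a = none ∧ b ≠ none) ∨
    (∃ i j : Fin m, a = some i ∧ b = some j ∧ (SimpleGraph.cycleGraph m).Adj i j))

/-! Each parity class of `{1, …, n}` has at least `⌊n/2⌋` elements, so under any bijective
labelling at least `⌊n/2⌋` rim vertices have the parity opposite to the hub's. Both parities occur
on the rim, and the number of parity changes around a cycle is even, so at least two rim edges are
negative as well. Labelling the hub `1`, one arc of the rim with the even labels and the rest with
the odd labels `≥ 3` attains `⌊n/2⌋ + 2`. -/

open Finset in
theorem Finset.card_filter_Icc_mod_two_ne (N : ℕ) {r : ℕ} (hr : r < 2) :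
    #{x ∈ Icc 1 N | x % 2 ≠ r} = (N + 1 - r) / 2 := by
  induction N with
  | zero =>
    rw [Icc_eq_empty (by omega), filter_empty, card_empty]
    omega
  | succ N ih =>
    rw [← insert_Icc_right_eq_Icc_add_one (by omega), filter_insert]
    split_ifs with h
    · rw [card_insert_of_notMem (by simp), ih]
      omega
    · rw [ih]
      omega

theorem Set.ncard_mod_two_ne_of_bijOn {V : Type*} [Fintype V] {f : V → ℕ}
    (hf : Set.BijOn f Set.univ (Set.Icc 1 (Fintype.card V))) {r : ℕ} (hr : r < 2) :
    {v | f v % 2 ≠ r}.ncard = (Fintype.card V + 1 - r) / 2 := by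
  have himage : f '' {v | f v % 2 ≠ r} = ↑{x ∈ Finset.Icc 1 (Fintype.card V) | x % 2 ≠ r} := by
    change f '' (f ⁻¹' {x | x % 2 ≠ r}) = _
    rw [Set.image_preimage_eq_inter_range, ← Set.image_univ, hf.image_eq]
    ext x
    simp [and_comm]
  rw [← (hf.injOn.mono (Set.subset_univ _)).ncard_image, himage,
    Set.ncard_coe_finset, Finset.card_filter_Icc_mod_two_ne _ hr]

theorem Equiv.Perm.even_ncard_ne_comp {α : Type*} [Finite α] (σ : Equiv.Perm α)
    (q : α → ZMod 2) : Even {x | q (σ x) ≠ q x}.ncard := by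
  classical
  have := Fintype.ofFinite α
  rw [← ZMod.natCast_eq_zero_iff_even, Set.ncard_eq_toFinset_card', Set.toFinset_ofPred,
    ← Finset.sum_boole]
  have hdiff : ∀ a b : ZMod 2, (if a ≠ b then 1 else 0) = a - b := by decide
  simp only [hdiff, Finset.sum_sub_distrib, Equiv.sum_comp σ q, sub_self]

theorem Fin.two_le_ncard_mod_two_ne_add_one {n : ℕ} (g : Fin (n + 1) → ℕ) {a b : Fin (n + 1)}
    (hab : g a % 2 ≠ g b % 2) : 2 ≤ {i | g (i + 1) % 2 ≠ g i % 2}.ncard := by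
  have heven : Even {i | g (i + 1) % 2 ≠ g i % 2}.ncard := by
    simpa [ZMod.natCast_eq_natCast_iff'] using
      Equiv.Perm.even_ncard_ne_comp (Equiv.addRight 1) (fun i => (g i : ZMod 2))
  suffices {i | g (i + 1) % 2 ≠ g i % 2}.ncard ≠ 0 by
    obtain ⟨k, hk⟩ := heven
    omega
  intro hzero
  have hstep : ∀ i, g (i + 1) % 2 = g i % 2 := by
    rw [Set.ncard_eq_zero (Set.toFinite _), Set.eq_empty_iff_forall_notMem] at hzero
    simpa using hzero
  have hconst : ∀ i, g i % 2 = g 0 % 2 := by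
    intro i
    induction i using Fin.induction with
    | zero => rfl
    | succ i ih => rw [← Fin.coeSucc_eq_succ, hstep, ih]
  exact hab ((hconst a).trans (hconst b).symm)

theorem rnaNumber_eq_of_forall_le {V : Type*} [Fintype V] {G : SimpleGraph V} {k : ℕ}
    (hlower : ∀ f : V → ℕ, Set.BijOn f Set.univ (Set.Icc 1 (Fintype.card V)) → k ≤ negCount G f)
    (hupper : ∃ f : V → ℕ, Set.BijOn f Set.univ (Set.Icc 1 (Fintype.card V)) ∧
      negCount G f ≤ k) :
    rnaNumber G = k := by
  obtain ⟨f, hf, hfk⟩ := hupper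
  have hmin : rnaNumber G ≤ negCount G f := Nat.sInf_le ⟨f, hf, rfl⟩
  refine le_antisymm (hmin.trans hfk) (le_csInf ⟨_, f, hf, rfl⟩ ?_)
  rintro _ ⟨g, hg, rfl⟩
  exact hlower g hg

section Wheel

variable {m : ℕ}

theorem edgeSet_wheelGraph :
    (wheelGraph (m + 3)).edgeSet =
      Set.range (fun i => s(some i, none)) ∪ Set.range (fun i => s(some (i + 1), some i)) := by
  refine Set.ext (Sym2.ind fun u v => ?_)
  rcases u with _ | i <;> rcases v with _ | j
  · simp
  · simp [wheelGraph]
  · simp [wheelGraph]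
  simp only [wheelGraph, ne_eq, SimpleGraph.cycleGraph_adj (n := m + 1), sub_eq_iff_eq_add,
    exists_and_left, SimpleGraph.mem_edgeSet, SimpleGraph.fromRel_adj, Option.some.injEq,
    reduceCtorEq, not_false_eq_true, and_true, exists_eq_left', false_or, Set.mem_union,
    Set.mem_range, Sym2.eq, Sym2.rel_iff', Prod.mk.injEq, and_false, Prod.swap_prod_mk, or_self,
    exists_const]
  constructor
  · rintro ⟨-, (rfl | rfl) | rfl | rfl⟩ <;> simp [add_comm]
  · rintro ⟨y, ⟨rfl, rfl⟩ | ⟨rfl, rfl⟩⟩ <;> simp [add_comm]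

theorem negCount_wheelGraph (f : Option (Fin (m + 3)) → ℕ) :
    negCount (wheelGraph (m + 3)) f =
      {i | f (some i) % 2 ≠ f none % 2}.ncard +
        {i | f (some (i + 1)) % 2 ≠ f (some i) % 2}.ncard := by
  have hsplit : {e ∈ (wheelGraph (m + 3)).edgeSet | diffParity f e} =
      (fun i => s(some i, none)) '' {i | f (some i) % 2 ≠ f none % 2} ∪
        (fun i => s(some (i + 1), some i)) '' {i | f (some (i + 1)) % 2 ≠ f (some i) % 2} := by
    ext e
    simp only [edgeSet_wheelGraph, Set.mem_ofPred_eq, Set.mem_union, Set.mem_range, Set.mem_image]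
    constructor
    · rintro ⟨⟨i, rfl⟩ | ⟨i, rfl⟩, h⟩
      exacts [Or.inl ⟨i, h, rfl⟩, Or.inr ⟨i, h, rfl⟩]
    · rintro (⟨i, h, rfl⟩ | ⟨i, h, rfl⟩)
      exacts [⟨Or.inl ⟨i, rfl⟩, h⟩, ⟨Or.inr ⟨i, rfl⟩, h⟩]
  have hdisjoint : Disjoint ((fun i => s(some i, none)) '' {i | f (some i) % 2 ≠ f none % 2})
      ((fun i => s(some (i + 1), some i)) '' {i | f (some (i + 1)) % 2 ≠ f (some i) % 2}) := by
    simp [Set.disjoint_left]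
  have hinj_hub : Function.Injective fun i : Fin (m + 3) => s(some i, none) := by
    intro i j h
    simpa using h
  have hinj_rim : Function.Injective fun i : Fin (m + 3) => s(some (i + 1), some i) := by
    intro i j h
    simp only [Sym2.eq_iff, Option.some.injEq] at h
    rcases h with ⟨-, h⟩ | ⟨rfl, h⟩
    · exact h
    · rw [add_assoc, left_eq_add, Fin.ext_iff, Fin.val_add, Fin.val_one] at h
      simp [Nat.mod_eq_of_lt] at h
  rw [negCount, hsplit, Set.ncard_union_eq hdisjoint, Set.ncard_image_of_injective _ hinj_hub,
    Set.ncard_image_of_injective _ hinj_rim]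

theorem ncard_hub_mod_two_ne_of_bijOn {f : Option (Fin (m + 3)) → ℕ}
    (hf : Set.BijOn f Set.univ (Set.Icc 1 (Fintype.card (Option (Fin (m + 3)))))) :
    {i | f (some i) % 2 ≠ f none % 2}.ncard = (m + 5 - f none % 2) / 2 := by
  have hsome : some '' {i | f (some i) % 2 ≠ f none % 2} = {v | f v % 2 ≠ f none % 2} := by
    ext (_ | i) <;> simp
  rw [← Set.ncard_image_of_injective _ (Option.some_injective _), hsome,
    Set.ncard_mod_two_ne_of_bijOn hf (Nat.mod_lt _ two_pos)]
  simp

theorem le_negCount_wheelGraph {f : Option (Fin (m + 3)) → ℕ}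
    (hf : Set.BijOn f Set.univ (Set.Icc 1 (Fintype.card (Option (Fin (m + 3)))))) :
    (m + 8) / 2 ≤ negCount (wheelGraph (m + 3)) f := by
  have hclass : ∀ r < 2, {v | f v % 2 ≠ r}.ncard = (m + 5 - r) / 2 := by
    intro r hr
    simpa using Set.ncard_mod_two_ne_of_bijOn hf hr
  obtain ⟨v, hv, hv_ne⟩ := Set.exists_ne_of_one_lt_ncard
    (s := {v | f v % 2 ≠ f (some 0) % 2}) (by rw [hclass _ (Nat.mod_lt _ two_pos)]; omega) none
  obtain ⟨b, rfl⟩ := Option.ne_none_iff_exists'.mp hv_ne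
  have hrim : 2 ≤ {i | f (some (i + 1)) % 2 ≠ f (some i) % 2}.ncard :=
    Fin.two_le_ncard_mod_two_ne_add_one (fun i => f (some i)) (Ne.symm hv)
  have hhub := ncard_hub_mod_two_ne_of_bijOn hf
  rw [negCount_wheelGraph]
  omega

variable (m) in
/-- Even labels on one arc of the rim and odd ones on the other, so that the parity changes only
twice around the rim. -/
def wheelLabelling : Option (Fin (m + 3)) → ℕ
  | none => 1
  | some i => if (i : ℕ) < (m + 4) / 2 then 2 * (i + 1) else 2 * (i - (m + 4) / 2) + 3

theorem bijOn_wheelLabelling :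
    Set.BijOn (wheelLabelling m) Set.univ (Set.Icc 1 (Fintype.card (Option (Fin (m + 3))))) := by
  have hmaps : Set.MapsTo (wheelLabelling m) Set.univ (Set.Icc 1 (m + 4)) := by
    rintro (_ | i) -
    · simp [wheelLabelling]
    · have := i.isLt
      simp only [wheelLabelling, Set.mem_Icc]
      split_ifs <;> omega
  have hinj : Set.InjOn (wheelLabelling m) Set.univ := by
    rintro (_ | i) - (_ | j) - h <;> simp only [wheelLabelling] at h
    · rfl
    · split_ifs at h <;> omega
    · split_ifs at h <;> omega
    · exact congrArg some (Fin.ext (by split_ifs at h <;> omega))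
  simp only [Fintype.card_option, Fintype.card_fin]
  refine ⟨hmaps, hinj, ?_⟩
  simpa using Finset.surjOn_of_injOn_of_card_le (s := Finset.univ) (t := Finset.Icc 1 (m + 4))
    (wheelLabelling m) (by simpa using hmaps) (by simpa using hinj) (by simp)

theorem negCount_wheelLabelling_le :
    negCount (wheelGraph (m + 3)) (wheelLabelling m) ≤ (m + 8) / 2 := by
  have hrim : {i | wheelLabelling m (some (i + 1)) % 2 ≠ wheelLabelling m (some i) % 2} ⊆
      {⟨(m + 4) / 2 - 1, by omega⟩, Fin.last _} := by
    intro i hi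
    simp only [Set.mem_insert_iff, Set.mem_singleton_iff, Fin.ext_iff, Fin.val_last]
    by_contra! hne
    have hsucc : ((i + 1 : Fin (m + 3)) : ℕ) = i + 1 := Fin.val_add_one_of_lt' (by omega)
    simp only [Set.mem_ofPred_eq, wheelLabelling, hsucc] at hi
    split_ifs at hi <;> omega
  have hrim_card := (Set.ncard_le_ncard hrim).trans (Set.ncard_insert_le _ _)
  rw [Set.ncard_singleton] at hrim_card
  have hhub_label : wheelLabelling m none = 1 := rfl
  rw [negCount_wheelGraph, ncard_hub_mod_two_ne_of_bijOn bijOn_wheelLabelling]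
  omega

end Wheel

/-- For `n ≥ 4`, the rna number of the wheel `W_n` on `n` vertices
(a cycle on `n - 1` vertices plus a hub) is `⌊(n+4)/2⌋`. -/
theorem rna_wheel (n : ℕ) (hn : 4 ≤ n) :
    rnaNumber (wheelGraph (n - 1)) = (n + 4) / 2 := by
  obtain ⟨m, rfl⟩ := Nat.exists_eq_add_of_le' hn
  change rnaNumber (wheelGraph (m + 3)) = (m + 8) / 2
  exact rnaNumber_eq_of_forall_le (fun _ hf => le_negCount_wheelGraph hf)
    ⟨_, bijOn_wheelLabelling, negCount_wheelLabelling_le⟩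
end
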